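/- arXiv:1401.4792 — 9 statements merged into one kernel-verified Lean document; each statement's English description precedes it below -/
import Mathlib

section
/- For every integer q ≥ 2, the polynomial x^q - x^{q-1} - 2 has a unique root λ in the interval (1, 2], this root is simple, and λ = 2 if and only if q = 2. -/
/-- For every integer `q ≥ 2` the polynomial `x^q - x^(q-1) - 2` has a unique
root `λ` in `(1, 2]`, the root is simple, and `λ = 2` iff `q = 2`. -/
theorem stmt_2 (q : ℕ) (hq : 2 ≤ q) :
    ∃ l : ℝ, (1 < l ∧ l ≤ 2) ∧ l ^ q - l ^ (q - 1) - 2 = 0 ∧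
      deriv (fun x : ℝ => x ^ q - x ^ (q - 1) - 2) l ≠ 0 ∧
      (∀ y : ℝ, 1 < y → y ≤ 2 → y ^ q - y ^ (q - 1) - 2 = 0 → y = l) ∧
      (l = 2 ↔ q = 2) := by
  set g : ℝ → ℝ := fun x => x ^ (q - 1) * (x - 1) with hg
  have hpow : ∀ x : ℝ, x ^ q = x ^ (q - 1) * x := by
    intro x
    rw [← pow_succ]
    congr 1
    omega
  have hfg : ∀ x : ℝ, x ^ q - x ^ (q - 1) - 2 = g x - 2 := by
    intro x; rw [hpow]; ring
  -- strict monotonicity of g on [1, ∞)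
  have mono : ∀ a b : ℝ, 1 ≤ a → a < b → g a < g b := by
    intro a b ha hab
    have h1 : a ^ (q - 1) ≤ b ^ (q - 1) :=
      pow_le_pow_left₀ (by linarith) hab.le _
    have hb : (0:ℝ) < b ^ (q - 1) := pow_pos (by linarith) _
    calc a ^ (q - 1) * (a - 1) ≤ b ^ (q - 1) * (a - 1) :=
          mul_le_mul_of_nonneg_right h1 (by linarith)
      _ < b ^ (q - 1) * (b - 1) := by
          exact mul_lt_mul_of_pos_left (by linarith) hb
  -- IVT on [1,2]
  have hg1 : g 1 = 0 := by simp [hg]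
  have hg2 : (2:ℝ) ≤ g 2 := by
    have h : (2:ℝ) ^ 1 ≤ 2 ^ (q - 1) := pow_le_pow_right₀ one_le_two (by omega)
    simp only [hg]
    nlinarith
  have hcont : ContinuousOn g (Set.Icc 1 2) := by
    apply Continuous.continuousOn; fun_prop
  have hIVT : Set.Icc (g 1) (g 2) ⊆ g '' Set.Icc 1 2 :=
    intermediate_value_Icc (by norm_num) hcont
  obtain ⟨l, hl12, hgl⟩ := hIVT ⟨by rw [hg1]; norm_num, hg2⟩
  have hl1 : 1 < l := by
    rcases lt_or_eq_of_le hl12.1 with h | h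
    · exact h
    · exfalso; rw [← h, hg1] at hgl; norm_num at hgl
  have hl2 : l ≤ 2 := hl12.2
  refine ⟨l, ⟨hl1, hl2⟩, by rw [hfg, hgl]; ring, ?_, ?_, ?_⟩
  · -- derivative nonzero
    have h1 : HasDerivAt (fun x : ℝ => x ^ q) ((q:ℝ) * l ^ (q - 1)) l :=
      hasDerivAt_pow q l
    have h2 : HasDerivAt (fun x : ℝ => x ^ (q - 1)) (((q - 1 : ℕ):ℝ) * l ^ (q - 1 - 1)) l :=
      hasDerivAt_pow (q - 1) l
    have hd : deriv (fun x : ℝ => x ^ q - x ^ (q - 1) - 2) l = _ := ((h1.sub h2).sub_const 2).deriv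
    rw [hd]
    have hql : ((q - 1 : ℕ):ℝ) * l ^ (q - 1 - 1) < (q:ℝ) * l ^ (q - 1) := by
      have hp : (0:ℝ) < l ^ (q - 1 - 1) := pow_pos (by linarith) _
      have hle : l ^ (q - 1 - 1) ≤ l ^ (q - 1) :=
        pow_le_pow_right₀ (by linarith) (by omega)
      have hc : ((q - 1 : ℕ):ℝ) < (q:ℝ) := by
        exact_mod_cast Nat.sub_lt (by omega) one_pos
      have hq0 : (0:ℝ) < (q:ℝ) := by positivity
      nlinarith [Nat.cast_nonneg (α := ℝ) (q - 1)]
    linarith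
  · -- uniqueness
    intro y hy1 hy2 hy0
    have hgy : g y = 2 := by have := hfg y; linarith
    by_contra hne
    rcases lt_or_gt_of_ne hne with h | h
    · have := mono y l hy1.le h; rw [hgy, hgl] at this; linarith
    · have := mono l y hl1.le h; rw [hgy, hgl] at this; linarith
  · constructor
    · intro hl
      by_contra hne
      have hq3 : 3 ≤ q := by omega
      have h4 : (2:ℝ) ^ 2 ≤ 2 ^ (q - 1) := pow_le_pow_right₀ one_le_two (by omega)
      have h2 : g 2 = 2 := hl ▸ hgl
      simp only [hg] at h2
      nlinarith
    · intro hq2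
      subst hq2
      have h2 : g 2 = 2 := by norm_num [hg]
      by_contra hne
      have hlt : l < 2 := lt_of_le_of_ne hl2 hne
      have hmm := mono l 2 hl1.le hlt
      rw [hgl, h2] at hmm
      exact lt_irrefl _ hmm
end

section
/- For every integer q ≥ 2, the largest real root λ_q of x^q - x^{q-1} - 2 = 0 satisfies λ_q > 1, the sequence (λ_q) is strictly decreasing in q, and λ_q → 1 as q → ∞. -/
open Filter

lemma pow_split (x : ℝ) (q : ℕ) (hq : 2 ≤ q) : x ^ q = x ^ (q - 1) * x := by
  conv_lhs => rw [show q = (q - 1) + 1 by omega]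
  rw [pow_succ]

lemma root_between (q : ℕ) (hq : 2 ≤ q) (a : ℝ) (ha : a ≤ 2)
    (hfa : a ^ q - a ^ (q - 1) - 2 ≤ 0) :
    ∃ y, a ≤ y ∧ y ≤ 2 ∧ y ^ q - y ^ (q - 1) - 2 = 0 := by
  have hcont : ContinuousOn (fun x : ℝ => x ^ q - x ^ (q - 1) - 2) (Set.Icc a 2) := by
    fun_prop
  have hf2 : (0 : ℝ) ≤ 2 ^ q - 2 ^ (q - 1) - 2 := by
    have h2 : (2 : ℝ) ^ q = 2 ^ (q - 1) * 2 := pow_split 2 q hq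
    have h21 : (2 : ℝ) ^ 1 ≤ 2 ^ (q - 1) :=
      pow_le_pow_right₀ one_le_two (by omega)
    simp at h21
    nlinarith
  have := intermediate_value_Icc ha hcont
    (Set.mem_Icc.mpr ⟨hfa, hf2⟩ : (0:ℝ) ∈ Set.Icc _ _)
  obtain ⟨y, hy, hyf⟩ := this
  exact ⟨y, hy.1, hy.2, hyf⟩

/-- For each `q ≥ 2` let `l q` be the largest real root of `x^q - x^(q-1) - 2`.
Then `l q > 1`, the sequence is strictly decreasing, and `l q → 1`. -/
theorem stmt_3 (l : ℕ → ℝ)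
    (hroot : ∀ q, 2 ≤ q → (l q) ^ q - (l q) ^ (q - 1) - 2 = 0)
    (hmax : ∀ q, 2 ≤ q → ∀ y : ℝ, y ^ q - y ^ (q - 1) - 2 = 0 → y ≤ l q) :
    (∀ q, 2 ≤ q → 1 < l q) ∧
    (∀ q, 2 ≤ q → l (q + 1) < l q) ∧
    Tendsto l atTop (nhds 1) := by
  -- key equation: l q ^ (q-1) * (l q - 1) = 2
  have key : ∀ q, 2 ≤ q → (l q) ^ (q - 1) * (l q - 1) = 2 := by
    intro q hq
    have h := hroot q hq
    have hs := pow_split (l q) q hq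
    nlinarith [h, hs]
  -- part 1: 1 < l q
  have hgt : ∀ q, 2 ≤ q → 1 < l q := by
    intro q hq
    obtain ⟨y, hy1, hy2, hyf⟩ := root_between q hq 1 (by norm_num) (by simp)
    have hyl := hmax q hq y hyf
    have hne : y ≠ 1 := by
      intro h; rw [h] at hyf; simp at hyf
    have : 1 < y := lt_of_le_of_ne hy1 (Ne.symm hne)
    linarith
  -- upper bound: l q ≤ 2
  have hle2 : ∀ q, 2 ≤ q → l q ≤ 2 := by
    intro q hq
    by_contra h
    push_neg at h
    have h1 : (2:ℝ) ^ (q - 1) ≤ (l q) ^ (q - 1) :=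
      pow_le_pow_left₀ (by norm_num) h.le _
    have h2 : (2:ℝ) ^ 1 ≤ 2 ^ (q - 1) := pow_le_pow_right₀ one_le_two (by omega)
    simp at h2
    have hk := key q hq
    nlinarith
  refine ⟨hgt, ?_, ?_⟩
  · -- strictly decreasing
    intro q hq
    set a := l (q + 1) with ha
    have hq1 : 2 ≤ q + 1 := by omega
    have ha1 : 1 < a := hgt (q + 1) hq1
    have ha2 : a ≤ 2 := hle2 (q + 1) hq1
    have hka : a ^ q * (a - 1) = 2 := by
      have := key (q + 1) hq1
      simpa using this
    have hapos : (0:ℝ) < a ^ (q - 1) := pow_pos (by linarith) _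
    have hsa : a ^ q = a ^ (q - 1) * a := pow_split a q hq
    have hfa : a ^ q - a ^ (q - 1) - 2 < 0 := by
      -- a^{q-1}(a-1) - a^q(a-1) = -a^{q-1}(a-1)^2 < 0
      nlinarith [sq_nonneg (a - 1), hapos, hka, hsa]
    obtain ⟨y, hy1, hy2, hyf⟩ := root_between q hq a ha2 hfa.le
    have hyl := hmax q hq y hyf
    have hne : y ≠ a := by
      intro h; rw [h] at hyf; linarith
    have : a < y := lt_of_le_of_ne hy1 (Ne.symm hne)
    linarith
  · -- limit
    rw [Metric.tendsto_atTop]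
    intro ε hε
    have h1ε : (1:ℝ) < 1 + ε := by linarith
    have htop : Tendsto (fun n => (1 + ε) ^ n) atTop atTop :=
      tendsto_pow_atTop_atTop_of_one_lt h1ε
    obtain ⟨N, hN⟩ := (htop.eventually_ge_atTop (2 / ε + 1)).exists_forall_of_atTop
    refine ⟨max (N + 1) 2, fun q hq => ?_⟩
    have hq2 : 2 ≤ q := le_trans (le_max_right _ _) hq
    have hqN : N ≤ q - 1 := by
      have := le_trans (le_max_left _ _) hq; omega
    have hbig : 2 / ε + 1 ≤ (1 + ε) ^ (q - 1) := hN _ hqN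
    have hlq1 : 1 < l q := hgt q hq2
    have hlt : l q < 1 + ε := by
      by_contra h
      push_neg at h
      have hpow : (1 + ε) ^ (q - 1) ≤ (l q) ^ (q - 1) :=
        pow_le_pow_left₀ (by linarith) h _
      have hk := key q hq2
      have hε2 : ε ≤ l q - 1 := by linarith
      have : (2 / ε + 1) * ε ≤ (l q) ^ (q - 1) * (l q - 1) := by
        apply mul_le_mul (le_trans hbig hpow) hε2 hε.le
        positivity
      rw [hk, add_mul, div_mul_cancel₀ (2:ℝ) hε.ne'] at this
      linarith
    rw [Real.dist_eq, abs_sub_lt_iff]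
    constructor <;> linarith
end

section
/- For n ≥ 3, the polynomial x^n - 2x^{n-1} + 1 has a largest real root λ_n in (1, 2), the sequence (λ_n) is strictly increasing, λ_n → 2, and 2 - λ_n is asymptotic to 2·2^{-n} as n → ∞ (i.e., (2 - λ_n)·2^n → 2). -/
open Filter Real

private lemma exists_root_aux (n : ℕ) (a b : ℝ) (hab : a ≤ b)
    (ha : a ^ n - 2 * a ^ (n - 1) + 1 < 0) (hb : 0 ≤ b ^ n - 2 * b ^ (n - 1) + 1) :
    ∃ x, a < x ∧ x ≤ b ∧ x ^ n - 2 * x ^ (n - 1) + 1 = 0 := by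
  have hc : ContinuousOn (fun x : ℝ => x ^ n - 2 * x ^ (n - 1) + 1) (Set.Icc a b) := by
    fun_prop
  obtain ⟨x, hx, hfx⟩ := intermediate_value_Icc hab hc ⟨ha.le, hb⟩
  simp only at hfx
  refine ⟨x, lt_of_le_of_ne hx.1 ?_, hx.2, hfx⟩
  rintro rfl
  linarith

private lemma key_facts (l : ℕ → ℝ)
    (hroot : ∀ n, 3 ≤ n → (l n) ^ n - 2 * (l n) ^ (n - 1) + 1 = 0)
    (hmax : ∀ n, 3 ≤ n → ∀ y : ℝ, y ^ n - 2 * y ^ (n - 1) + 1 = 0 → y ≤ l n)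
    (n : ℕ) (hn : 3 ≤ n) :
    3/2 < l n ∧ l n < 2 ∧ (2 - l n) * (l n) ^ (n - 1) = 1 := by
  obtain ⟨m, rfl⟩ : ∃ m, n = m + 1 := ⟨n - 1, by omega⟩
  have hm : 2 ≤ m := by omega
  have hmeq : m + 1 - 1 = m := rfl
  have heq := hroot (m + 1) hn
  rw [hmeq] at heq
  have hsucc : l (m + 1) ^ (m + 1) = l (m + 1) ^ m * l (m + 1) := pow_succ _ _
  have hl2 : l (m + 1) < 2 := by
    by_contra h
    push_neg at h
    have h0 : (0:ℝ) ≤ l (m + 1) ^ m := pow_nonneg (by linarith) m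
    nlinarith
  have h32 : 3/2 < l (m + 1) := by
    have hpow : (2:ℝ) < (3/2) ^ m := by
      calc (2:ℝ) < (3/2) ^ 2 := by norm_num
      _ ≤ (3/2) ^ m := pow_le_pow_right₀ (by norm_num) hm
    have ha : (3/2:ℝ) ^ (m + 1) - 2 * (3/2) ^ (m + 1 - 1) + 1 < 0 := by
      rw [hmeq, pow_succ]
      nlinarith
    have hb : (0:ℝ) ≤ 2 ^ (m + 1) - 2 * 2 ^ (m + 1 - 1) + 1 := by
      rw [hmeq, pow_succ]; ring_nf; norm_num
    obtain ⟨x, hx1, hx2, hx3⟩ := exists_root_aux (m + 1) (3/2) 2 (by norm_num) ha hb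
    exact lt_of_lt_of_le hx1 (hmax (m + 1) hn x hx3)
  refine ⟨h32, hl2, ?_⟩
  rw [hmeq]
  linear_combination (-1) * heq + hsucc

private lemma ub (l : ℕ → ℝ)
    (hroot : ∀ n, 3 ≤ n → (l n) ^ n - 2 * (l n) ^ (n - 1) + 1 = 0)
    (hmax : ∀ n, 3 ≤ n → ∀ y : ℝ, y ^ n - 2 * y ^ (n - 1) + 1 = 0 → y ≤ l n)
    (n : ℕ) (hn : 3 ≤ n) :
    2 - l n ≤ (2/3) ^ (n - 1) := by
  obtain ⟨h32, hl2, hid⟩ := key_facts l hroot hmax n hn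
  have hB : (0:ℝ) < (3/2) ^ (n - 1) := by positivity
  have hBA : ((3:ℝ)/2) ^ (n - 1) ≤ (l n) ^ (n - 1) :=
    pow_le_pow_left₀ (by norm_num) h32.le _
  have hCB : ((2:ℝ)/3) ^ (n - 1) * (3/2) ^ (n - 1) = 1 := by
    rw [← mul_pow]; norm_num
  nlinarith [hl2, hid]

/-- For `n ≥ 3` let `l n` be the largest real root of `x^n - 2x^(n-1) + 1`.
Then `l n ∈ (1,2)`, the sequence is strictly increasing, `l n → 2`, and
`(2 - l n) · 2^n → 2`. -/
theorem stmt_5 (l : ℕ → ℝ)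
    (hroot : ∀ n, 3 ≤ n → (l n) ^ n - 2 * (l n) ^ (n - 1) + 1 = 0)
    (hmax : ∀ n, 3 ≤ n → ∀ y : ℝ, y ^ n - 2 * y ^ (n - 1) + 1 = 0 → y ≤ l n) :
    (∀ n, 3 ≤ n → 1 < l n ∧ l n < 2) ∧
    (∀ n, 3 ≤ n → l n < l (n + 1)) ∧
    Tendsto l atTop (nhds 2) ∧
    Tendsto (fun n : ℕ => (2 - l n) * 2 ^ n) atTop (nhds 2) := by
  have key := key_facts l hroot hmax
  have hub := ub l hroot hmax
  refine ⟨fun n hn => ⟨by linarith [(key n hn).1], (key n hn).2.1⟩, ?_, ?_, ?_⟩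
  · -- strict monotonicity
    intro n hn
    obtain ⟨h32, hl2, hid⟩ := key n hn
    obtain ⟨m, rfl⟩ : ∃ m, n = m + 1 := ⟨n - 1, by omega⟩
    have hmeq : m + 1 - 1 = m := rfl
    rw [hmeq] at hid
    have heq := hroot (m + 1) hn
    rw [hmeq] at heq
    have ha : (l (m+1)) ^ (m + 2) - 2 * (l (m+1)) ^ (m + 2 - 1) + 1 < 0 := by
      have h1 : (l (m+1)) ^ (m + 2) = (l (m+1)) ^ (m+1) * l (m+1) := pow_succ _ _
      have h2 : (l (m+1)) ^ (m + 2 - 1) = (l (m+1)) ^ m * l (m+1) := pow_succ _ _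
      have h3 : (l (m+1)) ^ (m + 2) - 2 * (l (m+1)) ^ (m + 2 - 1) + 1
          = (l (m+1) ^ (m+1) - 2 * l (m+1) ^ m) * l (m+1) + 1 := by
        rw [h1, h2]; ring
      rw [h3]
      have : l (m+1) ^ (m+1) - 2 * l (m+1) ^ m = -1 := by linarith
      rw [this]
      linarith
    have hb : (0:ℝ) ≤ 2 ^ (m + 2) - 2 * 2 ^ (m + 2 - 1) + 1 := by
      have : (2:ℝ) ^ (m + 2) = 2 ^ (m + 1) * 2 := pow_succ _ _
      simp only [show m + 2 - 1 = m + 1 from rfl]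
      linarith
    obtain ⟨x, hx1, hx2, hx3⟩ := exists_root_aux (m + 2) (l (m+1)) 2 hl2.le ha hb
    exact lt_of_lt_of_le hx1 (hmax (m + 2) (by omega) x hx3)
  · -- l → 2
    have hlow : Tendsto (fun n : ℕ => 2 - (2/3:ℝ) ^ (n - 1)) atTop (nhds 2) := by
      have h0 : Tendsto (fun n : ℕ => (2/3:ℝ) ^ (n - 1)) atTop (nhds 0) :=
        (tendsto_pow_atTop_nhds_zero_of_lt_one (by norm_num) (by norm_num)).comp
          (tendsto_sub_atTop_nat 1)
      simpa using tendsto_const_nhds.sub h0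
    refine tendsto_of_tendsto_of_tendsto_of_le_of_le' hlow tendsto_const_nhds ?_ ?_
    · filter_upwards [eventually_ge_atTop 3] with n hn
      linarith [hub n hn]
    · filter_upwards [eventually_ge_atTop 3] with n hn
      exact (key n hn).2.1.le
  · -- (2 - l n) * 2^n → 2
    have hupper : Tendsto (fun n : ℕ => 2 * Real.exp ((n:ℝ) * (2/3) ^ n)) atTop (nhds 2) := by
      have h0 : Tendsto (fun n : ℕ => (n:ℝ) * (2/3) ^ n) atTop (nhds 0) :=
        tendsto_self_mul_const_pow_of_lt_one (by norm_num) (by norm_num)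
      have := (Real.continuous_exp.tendsto 0).comp h0
      rw [Real.exp_zero] at this
      simpa using tendsto_const_nhds.mul this
    refine tendsto_of_tendsto_of_tendsto_of_le_of_le' tendsto_const_nhds hupper ?_ ?_
    · -- 2 ≤ (2 - l n) * 2^n
      filter_upwards [eventually_ge_atTop 3] with n hn
      obtain ⟨h32, hl2, hid⟩ := key n hn
      have hAle : (l n) ^ (n - 1) ≤ 2 ^ (n - 1) := pow_le_pow_left₀ (by linarith) hl2.le _
      have h2n : (2:ℝ) ^ n = 2 * 2 ^ (n - 1) := by
        rw [← pow_succ']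
        congr 1
        omega
      rw [h2n]
      nlinarith
    · -- (2 - l n) * 2^n ≤ 2 * exp (n * (2/3)^n)
      filter_upwards [eventually_ge_atTop 3] with n hn
      obtain ⟨h32, hl2, hid⟩ := key n hn
      have hln_pos : (0:ℝ) < l n := by linarith
      have hpowpos : (0:ℝ) < (l n) ^ (n - 1) := pow_pos hln_pos _
      -- (2 - l n) * 2^(n-1) = (2 / l n)^(n-1)
      have h2n : (2:ℝ) ^ n = 2 * 2 ^ (n - 1) := by
        rw [← pow_succ']; congr 1; omega
      have hratio : (2 - l n) * 2 ^ (n - 1) = (2 / l n) ^ (n - 1) := by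
        rw [div_pow]
        rw [eq_div_iff (ne_of_gt hpowpos)]
        linear_combination (2:ℝ) ^ (n-1) * hid
      -- 2 / l n ≤ exp ((2/3)^n)
      have hstep : 2 / l n ≤ Real.exp ((2/3) ^ n) := by
        have hb1 : 2 / l n - 1 ≤ (2/3) ^ n := by
          have h1 : 2 / l n - 1 = (2 - l n) / l n := by field_simp
          have h2 : 2 - l n ≤ (2/3) ^ (n - 1) := hub n hn
          have h3 : (2 - l n) / l n ≤ (2/3) ^ (n - 1) * (2/3) := by
            rw [div_le_iff₀ hln_pos]
            nlinarith [pow_pos (show (0:ℝ) < 2/3 by norm_num) (n - 1)]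
          have h4 : ((2:ℝ)/3) ^ (n - 1) * (2/3) = (2/3) ^ n := by
            rw [← pow_succ]; congr 1; omega
          linarith
        calc 2 / l n = (2 / l n - 1) + 1 := by ring
        _ ≤ Real.exp (2 / l n - 1) := Real.add_one_le_exp _
        _ ≤ Real.exp ((2/3) ^ n) := Real.exp_le_exp.mpr hb1
      have hpow2 : (2 / l n) ^ (n - 1) ≤ Real.exp ((2/3) ^ n) ^ (n - 1) :=
        pow_le_pow_left₀ (by positivity) hstep _
      have hexp : Real.exp ((2/3) ^ n) ^ (n - 1) ≤ Real.exp ((n:ℝ) * (2/3) ^ n) := by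
        rw [← Real.exp_nat_mul]
        apply Real.exp_le_exp.mpr
        have : ((n - 1 : ℕ) : ℝ) ≤ (n : ℝ) := by
          exact_mod_cast Nat.cast_le.mpr (Nat.sub_le n 1)
        nlinarith [pow_pos (show (0:ℝ) < 2/3 by norm_num) n]
      calc (2 - l n) * 2 ^ n = 2 * ((2 - l n) * 2 ^ (n - 1)) := by rw [h2n]; ring
      _ = 2 * (2 / l n) ^ (n - 1) := by rw [hratio]
      _ ≤ 2 * Real.exp ((n:ℝ) * (2/3) ^ n) := by nlinarith [hpow2, hexp]
end

section
/- For n ≥ 2, the polynomial x^{n+1} - x^n - 2x^{n-1} + 2 has a largest real root λ_n in (1, 2), and 2 - λ_n is asymptotic to (4/3)·2^{-n} as n → ∞ (i.e., (2 - λ_n)·2^n → 4/3). -/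
open Filter

/-- For `n ≥ 2` let `l n` be the largest real root of
`x^(n+1) - x^n - 2x^(n-1) + 2`. Then `l n ∈ (1,2)` and `(2 - l n) · 2^n → 4/3`. -/
theorem stmt_6 (l : ℕ → ℝ)
    (hroot : ∀ n, 2 ≤ n →
      (l n) ^ (n + 1) - (l n) ^ n - 2 * (l n) ^ (n - 1) + 2 = 0)
    (hmax : ∀ n, 2 ≤ n → ∀ y : ℝ,
      y ^ (n + 1) - y ^ n - 2 * y ^ (n - 1) + 2 = 0 → y ≤ l n) :
    (∀ n, 2 ≤ n → 1 < l n ∧ l n < 2) ∧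
    Tendsto (fun n : ℕ => (2 - l n) * 2 ^ n) atTop (nhds (4 / 3)) := by
  -- key identity
  have key : ∀ n, 2 ≤ n → (2 - l n) * ((l n) ^ (n - 1) * (l n + 1)) = 2 := by
    intro n hn
    obtain ⟨m, rfl⟩ : ∃ m, n = m + 2 := ⟨n - 2, by omega⟩
    have h := hroot (m + 2) hn
    have e1 : m + 2 - 1 = m + 1 := rfl
    rw [e1] at h ⊢
    linear_combination (-1 : ℝ) * h
  -- upper bound
  have hlt2 : ∀ n, 2 ≤ n → l n < 2 := by
    intro n hn
    by_contra h
    push_neg at h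
    have hP : (0:ℝ) ≤ (l n) ^ (n - 1) * (l n + 1) :=
      mul_nonneg (pow_nonneg (by linarith) _) (by linarith)
    have k := key n hn
    nlinarith [mul_nonneg (by linarith : (0:ℝ) ≤ l n - 2) hP]
  -- lower bound 3/2 for n ≥ 3
  have h32 : ∀ n, 3 ≤ n → 3 / 2 ≤ l n := by
    intro n hn
    obtain ⟨m, rfl⟩ : ∃ m, n = m + 3 := ⟨n - 3, by omega⟩
    set f : ℝ → ℝ := fun y => y ^ (m + 3 + 1) - y ^ (m + 3) - 2 * y ^ (m + 3 - 1) + 2 with hf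
    have hcont : ContinuousOn f (Set.Icc (3/2 : ℝ) 2) := by
      apply Continuous.continuousOn
      fun_prop
    have hfa : f (3/2) ≤ 0 := by
      have hpow : (3/2 : ℝ) ^ 2 ≤ (3/2 : ℝ) ^ (m + 2) :=
        pow_le_pow_right₀ (by norm_num) (by omega)
      have e1 : m + 3 - 1 = m + 2 := rfl
      have : f (3/2) = 2 - 5/4 * (3/2 : ℝ) ^ (m + 2) := by
        rw [hf]; simp only [e1]; ring
      rw [this]
      nlinarith [hpow]
    have hfb : (0:ℝ) ≤ f 2 := by
      have e1 : m + 3 - 1 = m + 2 := rfl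
      have : f 2 = 2 := by rw [hf]; simp only [e1]; ring
      rw [this]; norm_num
    obtain ⟨c, hc1, hc2⟩ := intermediate_value_Icc (by norm_num : (3/2:ℝ) ≤ 2) hcont
      (Set.mem_Icc.2 ⟨hfa, hfb⟩)
    exact le_trans hc1.1 (hmax (m + 3) (by omega) c hc2)
  -- part 1
  have part1 : ∀ n, 2 ≤ n → 1 < l n ∧ l n < 2 := by
    intro n hn
    refine ⟨?_, hlt2 n hn⟩
    rcases eq_or_lt_of_le hn with h2 | h3
    · -- n = 2, use √2
      have hs : Real.sqrt 2 ^ 2 = 2 := Real.sq_sqrt (by norm_num)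
      have hroot2 : Real.sqrt 2 ^ (2 + 1) - Real.sqrt 2 ^ 2 - 2 * Real.sqrt 2 ^ (2 - 1) + 2 = 0 := by
        have e1 : (2:ℕ) - 1 = 1 := rfl
        rw [e1]
        linear_combination (Real.sqrt 2 - 1) * hs
      have hle := hmax 2 le_rfl _ hroot2
      have h1 : (1:ℝ) < Real.sqrt 2 := by
        nlinarith [hs, Real.sqrt_nonneg 2]
      rw [← h2]
      linarith
    · have := h32 n h3
      linarith
  refine ⟨part1, ?_⟩
  -- asymptotics
  set ebar : ℕ → ℝ := fun n => (4/5) * (2/3 : ℝ) ^ (n - 1) with hebar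
  have hebar0 : Tendsto ebar atTop (nhds 0) := by
    have h1 : Tendsto (fun k : ℕ => (2/3 : ℝ) ^ k) atTop (nhds 0) :=
      tendsto_pow_atTop_nhds_zero_of_lt_one (by norm_num) (by norm_num)
    have h2 : Tendsto (fun n : ℕ => (2/3 : ℝ) ^ (n - 1)) atTop (nhds 0) :=
      h1.comp (tendsto_sub_atTop_nat 1)
    simpa using h2.const_mul (4/5 : ℝ)
  have heps : ∀ n, 3 ≤ n → 0 < 2 - l n ∧ 2 - l n ≤ ebar n := by
    intro n hn
    have h32n := h32 n hn
    have hlt := hlt2 n (by omega)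
    refine ⟨by linarith, ?_⟩
    have hQpos : (0:ℝ) < (5/2) * (3/2 : ℝ) ^ (n - 1) := by positivity
    have hPQ : (5/2) * (3/2 : ℝ) ^ (n - 1) ≤ (l n) ^ (n - 1) * (l n + 1) := by
      have hp : (3/2 : ℝ) ^ (n - 1) ≤ (l n) ^ (n - 1) :=
        pow_le_pow_left₀ (by norm_num) h32n _
      nlinarith [pow_nonneg (by linarith : (0:ℝ) ≤ l n) (n - 1)]
    have k := key n (by omega)
    have hepos : (0:ℝ) < 2 - l n := by linarith
    have hmul : (2 - l n) * ((5/2) * (3/2 : ℝ) ^ (n - 1)) ≤ 2 := by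
      calc (2 - l n) * ((5/2) * (3/2 : ℝ) ^ (n - 1))
          ≤ (2 - l n) * ((l n) ^ (n - 1) * (l n + 1)) :=
            mul_le_mul_of_nonneg_left hPQ (le_of_lt hepos)
        _ = 2 := k
    have hQe : ebar n * ((5/2) * (3/2 : ℝ) ^ (n - 1)) = 2 := by
      rw [hebar]
      have : (2/3 : ℝ) ^ (n - 1) * (3/2 : ℝ) ^ (n - 1) = 1 := by
        rw [← mul_pow]; norm_num
      nlinarith [this]
    calc 2 - l n = (2 - l n) * ((5/2) * (3/2 : ℝ) ^ (n-1)) / ((5/2) * (3/2 : ℝ) ^ (n-1)) := by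
          field_simp
      _ ≤ 2 / ((5/2) * (3/2 : ℝ) ^ (n-1)) := by
          gcongr
      _ = ebar n := by
          rw [eq_comm, eq_div_iff (ne_of_gt hQpos)]; exact hQe
  -- l n → 2
  have hl2 : Tendsto l atTop (nhds 2) := by
    apply tendsto_of_tendsto_of_tendsto_of_le_of_le' (f := l)
      (g := fun n => 2 - ebar n) (h := fun _ => (2:ℝ))
    · simpa using tendsto_const_nhds.sub hebar0
    · exact tendsto_const_nhds
    · filter_upwards [eventually_ge_atTop 3] with n hn
      have := (heps n hn).2
      linarith
    · filter_upwards [eventually_ge_atTop 3] with n hn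
      exact le_of_lt (hlt2 n (by omega))
  -- (l n / 2)^(n-1) → 1
  have ha : Tendsto (fun n => (l n / 2) ^ (n - 1)) atTop (nhds 1) := by
    have hlow : Tendsto (fun n : ℕ => 1 - ((n - 1 : ℕ) : ℝ) * ebar n / 2) atTop (nhds 1) := by
      have hz : Tendsto (fun n : ℕ => ((n - 1 : ℕ) : ℝ) * ebar n / 2) atTop (nhds 0) := by
        have h1 : Tendsto (fun k : ℕ => (k : ℝ) * (2/3 : ℝ) ^ k) atTop (nhds 0) :=
          tendsto_self_mul_const_pow_of_lt_one (by norm_num) (by norm_num)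
        have h2 : Tendsto (fun n : ℕ => ((n - 1 : ℕ) : ℝ) * (2/3 : ℝ) ^ (n - 1)) atTop (nhds 0) :=
          h1.comp (tendsto_sub_atTop_nat 1)
        have h3 := (h2.const_mul (2/5 : ℝ))
        simp only [mul_zero] at h3
        convert h3 using 2 with n
        rw [hebar]; ring
      simpa using tendsto_const_nhds.sub hz
    apply tendsto_of_tendsto_of_tendsto_of_le_of_le' hlow tendsto_const_nhds
    · filter_upwards [eventually_ge_atTop 3] with n hn
      have he := heps n hn
      have hb : (1 : ℝ) + ((n-1 : ℕ) : ℝ) * (-(2 - l n)/2) ≤ (1 + (-(2 - l n)/2)) ^ (n-1) :=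
        one_add_mul_le_pow (by linarith [(heps n hn).1, h32 n hn]) (n - 1)
      have hrw : (1 : ℝ) + (-(2 - l n)/2) = l n / 2 := by ring
      rw [hrw] at hb
      have hmono : ((n-1 : ℕ) : ℝ) * (2 - l n) ≤ ((n-1 : ℕ) : ℝ) * ebar n :=
        mul_le_mul_of_nonneg_left he.2 (Nat.cast_nonneg _)
      nlinarith [hb, hmono]
    · filter_upwards [eventually_ge_atTop 3] with n hn
      have hlt := hlt2 n (by omega)
      have : l n / 2 ≤ 1 := by linarith
      calc (l n / 2) ^ (n - 1) ≤ 1 ^ (n - 1) :=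
            pow_le_pow_left₀ (by linarith [h32 n hn]) this _
        _ = 1 := one_pow _
  -- final limit
  have hb3 : Tendsto (fun n => l n + 1) atTop (nhds 3) := by
    have := hl2.add (tendsto_const_nhds (x := (1:ℝ)))
    norm_num at this
    exact this
  have hdiv : Tendsto (fun n => 4 / ((l n / 2) ^ (n - 1) * (l n + 1))) atTop (nhds (4/3)) := by
    have := (tendsto_const_nhds (x := (4:ℝ))).div (ha.mul hb3) (by norm_num)
    norm_num at this
    exact this
  apply hdiv.congr'
  filter_upwards [eventually_ge_atTop 3] with n hn
  have hlt := hlt2 n (by omega)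
  have h32n := h32 n hn
  have k := key n (by omega)
  have hlpos : (0:ℝ) < l n := by linarith
  have hppos : (0:ℝ) < (l n) ^ (n - 1) := pow_pos hlpos _
  have h2pos : (0:ℝ) < (2:ℝ) ^ (n - 1) := by positivity
  have hdp : (l n / 2) ^ (n - 1) = (l n) ^ (n - 1) / 2 ^ (n - 1) := div_pow _ _ _
  have h2n : (2:ℝ) ^ n = 2 * 2 ^ (n - 1) := by
    rw [← pow_succ']
    congr 1
    omega
  rw [hdp, h2n]
  field_simp
  linear_combination (-2 : ℝ) * k
end

section
/- For odd n ≥ 3, the polynomial x^n - 2x^{n-2} - 1 has a largest real root λ_n with λ_n > √2, the sequence (λ_n over odd n) is strictly decreasing, and (λ_n - √2)·(√2)^n → 1/√2 as n → ∞ through odd integers. -/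
open Filter

private lemma root_id' {n : ℕ} (hn : 3 ≤ n) {x : ℝ}
    (h : x ^ n - 2 * x ^ (n - 2) - 1 = 0) : x ^ (n - 2) * (x ^ 2 - 2) = 1 := by
  obtain ⟨m, rfl⟩ : ∃ m, n = m + 2 := ⟨n - 2, by omega⟩
  simp only [Nat.add_sub_cancel] at h ⊢
  rw [pow_add] at h
  linear_combination h

set_option maxHeartbeats 1000000 in
private lemma stmt7_bounds (k : ℕ) (L : ℝ) (hLs : Real.sqrt 2 < L)
    (hgL : L ^ (2 * k + 1) * (L ^ 2 - 2) = 1) :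
    2 * (1 - (2 * (k : ℝ) + 1) * (1 / 2 : ℝ) ^ (k + 2) / Real.sqrt 2) /
        (2 * Real.sqrt 2 + (1 / 2 : ℝ) ^ (k + 2)) ≤
      (L - Real.sqrt 2) * Real.sqrt 2 ^ (2 * k + 3) ∧
    (L - Real.sqrt 2) * Real.sqrt 2 ^ (2 * k + 3) ≤ 1 / Real.sqrt 2 := by
  set s := Real.sqrt 2 with hs_def
  have hs2 : s ^ 2 = 2 := Real.sq_sqrt (by norm_num)
  have hs0 : 0 < s := Real.sqrt_pos.2 (by norm_num)
  have hs1 : 1 < s := by nlinarith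
  have hL0 : 0 < L := lt_trans hs0 hLs
  have hfact : (L - s) * (L ^ (2 * k + 1) * (L + s)) = 1 := by
    have hfs2 : L ^ 2 - 2 = (L - s) * (L + s) := by nlinarith
    rw [hfs2] at hgL
    linear_combination hgL
  set D := L ^ (2 * k + 1) * (L + s) with hD_def
  have hD0 : 0 < D := mul_pos (pow_pos hL0 _) (by linarith)
  have hDlb : s ^ (2 * k + 4) ≤ D := by
    have hp1 : s ^ (2 * k + 1) ≤ L ^ (2 * k + 1) := pow_le_pow_left₀ hs0.le hLs.le _
    have hp2 : 2 * s ≤ L + s := by linarith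
    have hse : s ^ (2 * k + 4) = s ^ (2 * k + 1) * (2 * s) := by
      rw [show 2 * k + 4 = (2 * k + 1) + 3 by omega, pow_add]
      have h3 : s ^ 3 = 2 * s := by nlinarith
      rw [h3]
    rw [hse]
    exact mul_le_mul hp1 hp2 (by positivity) (pow_pos hL0 _).le
  have hLsD : L - s = 1 / D := by
    rw [eq_div_iff hD0.ne']
    exact hfact
  have hEeq : (L - s) * s ^ (2 * k + 3) = s ^ (2 * k + 3) / D := by rw [hLsD]; ring
  constructor
  · -- lower bound
    set c := ((1 / 2 : ℝ)) ^ (k + 2) with hc_def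
    have hc0 : 0 < c := by positivity
    have hcs : c = (1 / s) ^ (2 * k + 4) := by
      rw [show 2 * k + 4 = 2 * (k + 2) by omega, pow_mul]
      have : ((1 / s : ℝ)) ^ 2 = 1 / 2 := by rw [div_pow, hs2]; norm_num
      rw [this]
    have hc14 : c ≤ 1 / 4 := by
      calc c = (1 / 2 : ℝ) ^ (k + 2) := rfl
        _ ≤ (1 / 2 : ℝ) ^ 2 := pow_le_pow_of_le_one (by norm_num) (by norm_num) (by omega)
        _ = 1 / 4 := by norm_num
    have heps : L - s ≤ c := by
      rw [hLsD, hcs, div_pow, one_pow]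
      exact one_div_le_one_div_of_le (by positivity) hDlb
    have hLub : L ≤ s + c := by linarith
    have hDub : D ≤ (s + c) ^ (2 * k + 1) * (2 * s + c) := by
      refine mul_le_mul (pow_le_pow_left₀ hL0.le hLub _) (by linarith) (by linarith)
        (by positivity)
    have hlb1 : s ^ (2 * k + 3) / ((s + c) ^ (2 * k + 1) * (2 * s + c)) ≤
        (L - s) * s ^ (2 * k + 3) := by
      rw [hEeq]
      exact div_le_div_of_nonneg_left (by positivity) hD0 hDub
    have hcs1 : c / s ≤ 1 := by
      rw [div_le_one hs0]; linarith
    have hberno : 1 - (2 * (k : ℝ) + 1) * (c / s) ≤ (1 - c / s) ^ (2 * k + 1) := by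
      have hb2 : (-2 : ℝ) ≤ -(c / s) := by
        have : 0 ≤ c / s := by positivity
        linarith
      have hber := one_add_mul_le_pow hb2 (2 * k + 1)
      have hcast : ((2 * k + 1 : ℕ) : ℝ) = 2 * (k : ℝ) + 1 := by push_cast; ring
      rw [hcast] at hber
      calc 1 - (2 * (k : ℝ) + 1) * (c / s) = 1 + (2 * (k : ℝ) + 1) * (-(c / s)) := by ring
        _ ≤ (1 + -(c / s)) ^ (2 * k + 1) := hber
        _ = (1 - c / s) ^ (2 * k + 1) := by ring_nf
    have hbase0 : (0 : ℝ) ≤ 1 - c / s := by linarith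
    have hbase : 1 - c / s ≤ s / (s + c) := by
      rw [le_div_iff₀ (by linarith : (0 : ℝ) < s + c)]
      have hd : c / s * s = c := div_mul_cancel₀ c hs0.ne'
      have hnn : 0 ≤ c / s * c := mul_nonneg (by positivity) hc0.le
      nlinarith
    have hpow : (1 - c / s) ^ (2 * k + 1) ≤ (s / (s + c)) ^ (2 * k + 1) :=
      pow_le_pow_left₀ hbase0 hbase _
    have hkey2 : s ^ (2 * k + 3) / ((s + c) ^ (2 * k + 1) * (2 * s + c)) =
        2 * (s / (s + c)) ^ (2 * k + 1) / (2 * s + c) := by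
      rw [div_pow]
      have hsn : s ^ (2 * k + 3) = 2 * s ^ (2 * k + 1) := by
        rw [show 2 * k + 3 = (2 * k + 1) + 2 by omega, pow_add, hs2]; ring
      rw [hsn]
      have hsc0 : (0 : ℝ) < (s + c) ^ (2 * k + 1) := by positivity
      field_simp
    have hnum : 1 - (2 * (k : ℝ) + 1) * (1 / 2 : ℝ) ^ (k + 2) / s ≤
        (s / (s + c)) ^ (2 * k + 1) := by
      refine le_trans (le_of_eq ?_) (le_trans hberno hpow)
      rw [hc_def]
      ring
    refine le_trans ?_ hlb1
    rw [hkey2]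
    have h2sc : (0 : ℝ) < 2 * s + c := by linarith
    rw [div_le_div_iff₀ h2sc h2sc]
    nlinarith [hnum]
  · -- upper bound
    rw [hEeq]
    have hstep : s ^ (2 * k + 3) / D ≤ s ^ (2 * k + 3) / s ^ (2 * k + 4) :=
      div_le_div_of_nonneg_left (by positivity) (by positivity) hDlb
    have heq : s ^ (2 * k + 3) / s ^ (2 * k + 4) = 1 / s := by
      have h4 : s ^ (2 * k + 4) = s ^ (2 * k + 3) * s := by rw [← pow_succ]
      rw [h4, ← div_div, div_self (pow_pos hs0 (2 * k + 3)).ne']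
    linarith [hstep, heq.le, heq.ge]

set_option maxHeartbeats 1000000 in
private lemma stmt7_lim :
    Tendsto (fun k : ℕ =>
        2 * (1 - (2 * (k : ℝ) + 1) * (1 / 2 : ℝ) ^ (k + 2) / Real.sqrt 2) /
          (2 * Real.sqrt 2 + (1 / 2 : ℝ) ^ (k + 2)))
      atTop (nhds (1 / Real.sqrt 2)) := by
  set s := Real.sqrt 2 with hs_def
  have hs0 : 0 < s := Real.sqrt_pos.2 (by norm_num)
  have t1 : Tendsto (fun k : ℕ => (2 * (k : ℝ) + 1) * (1 / 2 : ℝ) ^ (k + 2)) atTop (nhds 0) := by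
    have ha := tendsto_self_mul_const_pow_of_lt_one (r := (1 / 2 : ℝ)) (by norm_num) (by norm_num)
    have hb := tendsto_pow_atTop_nhds_zero_of_lt_one (r := (1 / 2 : ℝ)) (by norm_num) (by norm_num)
    have hcomb := (ha.const_mul (1 / 2 : ℝ)).add (hb.const_mul (1 / 4 : ℝ))
    simp only [mul_zero, add_zero] at hcomb
    convert hcomb using 2 with k
    ring
  have t2 : Tendsto (fun k : ℕ => (1 / 2 : ℝ) ^ (k + 2)) atTop (nhds 0) := by
    have hb := tendsto_pow_atTop_nhds_zero_of_lt_one (r := (1 / 2 : ℝ)) (by norm_num) (by norm_num)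
    have := hb.comp (tendsto_add_atTop_nat 2)
    simpa [Function.comp_def] using this
  have hnum : Tendsto (fun k : ℕ =>
      2 * (1 - (2 * (k : ℝ) + 1) * (1 / 2 : ℝ) ^ (k + 2) / s)) atTop (nhds 2) := by
    have hX := t1.div_const s
    have hY := hX.const_sub 1
    have := hY.const_mul 2
    simpa using this
  have hden : Tendsto (fun k : ℕ => 2 * s + (1 / 2 : ℝ) ^ (k + 2)) atTop (nhds (2 * s)) := by
    simpa using (tendsto_const_nhds (x := 2 * s) (f := atTop)).add t2
  have hdiv := hnum.div hden (by positivity)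
  have h2s : (2 : ℝ) / (2 * s) = 1 / s := by
    rw [div_eq_div_iff (by positivity) hs0.ne']; ring
  rw [show (1 / s : ℝ) = 2 / (2 * s) from h2s.symm]
  exact hdiv

set_option maxHeartbeats 1000000 in
/-- For odd `n ≥ 3` let `l n` be the largest real root of `x^n - 2x^(n-2) - 1`.
Then `l n > √2`, the sequence (over odd `n`) is strictly decreasing, and
`(l n - √2)·(√2)^n → 1/√2` as `n → ∞` through odd integers. -/
theorem stmt_7 (l : ℕ → ℝ)
    (hroot : ∀ n, 3 ≤ n → Odd n → (l n) ^ n - 2 * (l n) ^ (n - 2) - 1 = 0)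
    (hmax : ∀ n, 3 ≤ n → Odd n → ∀ y : ℝ,
      y ^ n - 2 * y ^ (n - 2) - 1 = 0 → y ≤ l n) :
    (∀ n, 3 ≤ n → Odd n → Real.sqrt 2 < l n) ∧
    (∀ n, 3 ≤ n → Odd n → l (n + 2) < l n) ∧
    Tendsto (fun k : ℕ => (l (2 * k + 3) - Real.sqrt 2) * (Real.sqrt 2) ^ (2 * k + 3))
      atTop (nhds (1 / Real.sqrt 2)) := by
  set s := Real.sqrt 2 with hs_def
  have hs2 : s ^ 2 = 2 := Real.sq_sqrt (by norm_num)
  have hs0 : 0 < s := Real.sqrt_pos.2 (by norm_num)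
  have hs1 : 1 < s := by nlinarith
  have hsle2 : s ≤ 2 := by nlinarith
  -- Part 1 : l n > √2
  have h1 : ∀ n, 3 ≤ n → Odd n → s < l n := by
    intro n hn ho
    obtain ⟨m, hm⟩ : ∃ m, n = m + 2 := ⟨n - 2, by omega⟩
    subst hm
    have hm1 : 1 ≤ m := by omega
    have hcont : ContinuousOn (fun x : ℝ => x ^ (m + 2) - 2 * x ^ m - 1)
        (Set.Icc s 2) := by fun_prop
    have hfs : s ^ (m + 2) - 2 * s ^ m - 1 = -1 := by
      rw [pow_add, hs2]; ring
    have hf2 : (0 : ℝ) ≤ 2 ^ (m + 2) - 2 * 2 ^ m - 1 := by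
      have h1' : (1 : ℝ) ≤ 2 ^ m := one_le_pow₀ (by norm_num)
      rw [pow_add]; nlinarith
    have h0mem : (0 : ℝ) ∈ Set.Icc (s ^ (m + 2) - 2 * s ^ m - 1)
        ((2 : ℝ) ^ (m + 2) - 2 * 2 ^ m - 1) := ⟨by rw [hfs]; norm_num, hf2⟩
    obtain ⟨c, hcmem, hfc⟩ := intermediate_value_Icc hsle2 hcont h0mem
    simp only [] at hfc
    have hcle : c ≤ l (m + 2) := by
      refine hmax (m + 2) hn ho c ?_
      simpa using hfc
    have hsc : s < c := by
      rcases eq_or_lt_of_le hcmem.1 with h | h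
      · exfalso
        rw [← h] at hfc
        rw [hfs] at hfc
        norm_num at hfc
      · exact h
    linarith
  -- characteristic identity
  have hg : ∀ n, 3 ≤ n → Odd n → (l n) ^ (n - 2) * ((l n) ^ 2 - 2) = 1 :=
    fun n hn ho => root_id' hn (hroot n hn ho)
  -- comparison lemma
  have hcomp : ∀ (m : ℕ) (a b : ℝ), s < a → s < b →
      a ^ m * (a ^ 2 - 2) < b ^ m * (b ^ 2 - 2) → a < b := by
    intro m a b ha hb hlt
    by_contra hab
    push_neg at hab
    have h0b : 0 < b := lt_trans hs0 hb
    have hbm : b ^ m ≤ a ^ m := pow_le_pow_left₀ h0b.le hab m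
    have hb2 : 0 < b ^ 2 - 2 := by nlinarith
    have hbm0 : 0 < b ^ m := pow_pos h0b m
    have hab2 : b ^ 2 ≤ a ^ 2 := by nlinarith
    nlinarith
  -- Part 2 : strictly decreasing
  have h2 : ∀ n, 3 ≤ n → Odd n → l (n + 2) < l n := by
    intro n hn ho
    have ho2 : Odd (n + 2) := by obtain ⟨j, rfl⟩ := ho; exact ⟨j + 1, by ring⟩
    have ha := h1 (n + 2) (by omega) ho2
    have hb := h1 n hn ho
    have hga : (l (n + 2)) ^ n * ((l (n + 2)) ^ 2 - 2) = 1 := by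
      have := hg (n + 2) (by omega) ho2
      simpa using this
    have hgb := hg n hn ho
    set a := l (n + 2) with ha_def
    have ha0 : 0 < a := lt_trans hs0 ha
    have ha2 : 2 < a ^ 2 := by nlinarith
    have hsplit : a ^ n = a ^ (n - 2) * a ^ 2 := by
      rw [← pow_add]; congr 1; omega
    have h2a : a ^ (n - 2) * (a ^ 2 - 2) * a ^ 2 = 1 := by
      rw [← hga, hsplit]; ring
    have hlt : a ^ (n - 2) * (a ^ 2 - 2) < 1 := by nlinarith [pow_pos ha0 (n - 2)]
    exact hcomp (n - 2) a (l n) ha hb (by rw [hgb]; exact hlt)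
  refine ⟨h1, h2, ?_⟩
  -- Part 3 : the limit, by squeezing
  have hbounds : ∀ k : ℕ,
      2 * (1 - (2 * (k : ℝ) + 1) * (1 / 2 : ℝ) ^ (k + 2) / s) /
          (2 * s + (1 / 2 : ℝ) ^ (k + 2)) ≤
        (l (2 * k + 3) - s) * s ^ (2 * k + 3) ∧
      (l (2 * k + 3) - s) * s ^ (2 * k + 3) ≤ 1 / s := by
    intro k
    have hn3 : 3 ≤ 2 * k + 3 := by omega
    have hodd : Odd (2 * k + 3) := ⟨k + 1, by omega⟩
    have hgL : (l (2 * k + 3)) ^ (2 * k + 1) * ((l (2 * k + 3)) ^ 2 - 2) = 1 := by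
      have := hg (2 * k + 3) hn3 hodd
      simpa [show 2 * k + 3 - 2 = 2 * k + 1 by omega] using this
    exact stmt7_bounds k (l (2 * k + 3)) (h1 (2 * k + 3) hn3 hodd) hgL
  exact tendsto_of_tendsto_of_tendsto_of_le_of_le stmt7_lim tendsto_const_nhds
    (fun k => (hbounds k).1) (fun k => (hbounds k).2)
end

section
/- Let λ₀ be the unique real root of x^3 - x^2 - 2 (so λ₀ > 1). For n ≥ 3, the polynomial x^{n-2}(x^3 - x^2 - 2) + 2 has a largest real root λ_n with 1 < λ_n < λ₀, and (λ₀ - λ_n)·λ₀^n converges to a positive constant as n → ∞. -/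
open Filter

/-- Let `λ₀` be the unique real root of `x^3 - x^2 - 2` (so `λ₀ > 1`). For
`n ≥ 3` let `l n` be the largest real root of `x^(n-2)·(x^3 - x^2 - 2) + 2`.
Then `1 < l n < λ₀` and `(λ₀ - l n)·λ₀^n` converges to a positive constant. -/
theorem stmt_9 (l₀ : ℝ) (h₀ : l₀ ^ 3 - l₀ ^ 2 - 2 = 0)
    (huniq : ∀ y : ℝ, y ^ 3 - y ^ 2 - 2 = 0 → y = l₀) (h₀1 : 1 < l₀)
    (l : ℕ → ℝ)
    (hroot : ∀ n, 3 ≤ n → (l n) ^ (n - 2) * ((l n) ^ 3 - (l n) ^ 2 - 2) + 2 = 0)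
    (hmax : ∀ n, 3 ≤ n → ∀ y : ℝ,
      y ^ (n - 2) * (y ^ 3 - y ^ 2 - 2) + 2 = 0 → y ≤ l n) :
    (∀ n, 3 ≤ n → 1 < l n ∧ l n < l₀) ∧
    ∃ K : ℝ, 0 < K ∧
      Tendsto (fun n : ℕ => (l₀ - l n) * l₀ ^ n) atTop (nhds K) := by
  -- the quadratic cofactor:  x^3 - x^2 - 2 = (x - l₀) * q x
  set q : ℝ → ℝ := fun x => x ^ 2 + (l₀ - 1) * x + (l₀ ^ 2 - l₀) with hq
  have hfac : ∀ x : ℝ, x ^ 3 - x ^ 2 - 2 = (x - l₀) * q x := by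
    intro x; simp only [hq]; linear_combination h₀
  have hqpos : ∀ x : ℝ, 0 < x → 0 < q x := by
    intro x hx; simp only [hq]; nlinarith [sq_nonneg x]
  have hqlb : ∀ x : ℝ, (1.2 : ℝ) ≤ x → (1.44 : ℝ) ≤ q x := by
    intro x hx; simp only [hq]; nlinarith
  -- 1.2 < l₀
  have h12 : (1.2 : ℝ) < l₀ := by nlinarith [sq_nonneg (l₀ - 1.2), sq_nonneg l₀]
  -- upper bound  l n < l₀
  have hub : ∀ n, 3 ≤ n → l n < l₀ := by
    intro n hn
    by_contra h
    push_neg at h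
    have hr := hroot n hn
    have hpos : 0 < (l n) ^ (n - 2) := pow_pos (by linarith) _
    have hg : 0 ≤ (l n) ^ 3 - (l n) ^ 2 - 2 := by
      rw [hfac]
      exact mul_nonneg (by linarith) (hqpos _ (by linarith)).le
    nlinarith [mul_nonneg hpos.le hg]
  -- lower bound  1.2 ≤ l n, via IVT
  have hlb : ∀ n, 3 ≤ n → (1.2 : ℝ) ≤ l n := by
    intro n hn
    set F : ℝ → ℝ := fun x => x ^ (n - 2) * (x ^ 3 - x ^ 2 - 2) + 2 with hF
    have hFcont : ContinuousOn F (Set.Icc 1.2 l₀) := by fun_prop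
    have hF1 : F 1.2 < 0 := by
      have h1 : (1.2 : ℝ) ≤ (1.2 : ℝ) ^ (n - 2) :=
        le_self_pow₀ (by norm_num) (by omega)
      have h2 : (1.2 : ℝ) ^ (n - 2) * ((1.2:ℝ) ^ 3 - 1.2 ^ 2 - 2)
          ≤ (1.2 : ℝ) * ((1.2:ℝ) ^ 3 - 1.2 ^ 2 - 2) := by
        apply mul_le_mul_of_nonpos_right h1
        norm_num
      simp only [hF]
      nlinarith
    have hFl : F l₀ = 2 := by
      simp only [hF, h₀, mul_zero, zero_add]
    have h0mem : (0 : ℝ) ∈ Set.Icc (F 1.2) (F l₀) := ⟨hF1.le, by rw [hFl]; norm_num⟩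
    obtain ⟨c, hc, hFc⟩ := intermediate_value_Icc h12.le hFcont h0mem
    have := hmax n hn c hFc
    linarith [hc.1]
  -- the key identity
  have hkey : ∀ n, 3 ≤ n → (l₀ - l n) * ((l n) ^ (n - 2) * q (l n)) = 2 := by
    intro n hn
    linear_combination (l n) ^ (n - 2) * hfac (l n) - hroot n hn
  -- geometric bound on l₀ - l n
  have hε : ∀ n, 3 ≤ n → l₀ - l n ≤ 2 * (5 / 6 : ℝ) ^ n := by
    intro n hn
    have hl12 := hlb n hn
    have hq12 := hqlb _ hl12
    have hP : (1.2 : ℝ) ^ n ≤ (l n) ^ (n - 2) * q (l n) := by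
      have h1 : (1.2 : ℝ) ^ (n - 2) ≤ (l n) ^ (n - 2) :=
        pow_le_pow_left₀ (by norm_num) hl12 _
      have h2 : (1.2 : ℝ) ^ n = (1.2 : ℝ) ^ (n - 2) * 1.44 := by
        have : n = (n - 2) + 2 := by omega
        rw [this, pow_add]; norm_num
      rw [h2]
      exact mul_le_mul h1 hq12 (by norm_num) (pow_nonneg (by linarith) _)
    have hPpos : (0 : ℝ) < (l n) ^ (n - 2) * q (l n) :=
      lt_of_lt_of_le (pow_pos (by norm_num) n) hP
    have hεn : l₀ - l n = 2 / ((l n) ^ (n - 2) * q (l n)) :=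
      eq_div_of_mul_eq hPpos.ne' (hkey n hn)
    rw [hεn]
    have h56 : (2 : ℝ) * (5 / 6) ^ n = 2 / (1.2 : ℝ) ^ n := by
      rw [eq_div_iff (by positivity), mul_assoc, ← mul_pow]
      norm_num
    rw [h56]
    exact div_le_div_of_nonneg_left (by norm_num) (by positivity) hP
  have hεnn : ∀ n, 3 ≤ n → 0 ≤ l₀ - l n := fun n hn => by linarith [hub n hn]
  -- l n → l₀
  have hl_tendsto : Tendsto l atTop (nhds l₀) := by
    have hgeo : Tendsto (fun n : ℕ => l₀ - 2 * (5 / 6 : ℝ) ^ n) atTop (nhds (l₀ - 2 * 0)) :=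
      tendsto_const_nhds.sub
        ((tendsto_pow_atTop_nhds_zero_of_lt_one (by norm_num) (by norm_num)).const_mul 2)
    rw [mul_zero, sub_zero] at hgeo
    apply tendsto_of_tendsto_of_tendsto_of_le_of_le' hgeo tendsto_const_nhds
    · filter_upwards [eventually_ge_atTop 3] with n hn
      linarith [hε n hn]
    · filter_upwards [eventually_ge_atTop 3] with n hn
      linarith [hub n hn]
  -- (l₀ / l n)^(n-2) → 1
  have hr_tendsto : Tendsto (fun n : ℕ => (l₀ / l n) ^ (n - 2)) atTop (nhds 1) := by
    have hupper : Tendsto (fun n : ℕ => Real.exp ((n : ℝ) * ((5 / 3) * (5 / 6 : ℝ) ^ n)))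
        atTop (nhds 1) := by
      have h1 : Tendsto (fun n : ℕ => (n : ℝ) * ((5 / 3) * (5 / 6 : ℝ) ^ n)) atTop (nhds 0) := by
        have := (tendsto_self_mul_const_pow_of_lt_one (r := (5/6 : ℝ))
          (by norm_num) (by norm_num)).const_mul (5/3 : ℝ)
        rw [mul_zero] at this
        convert this using 2 with n
        ring
      have := (Real.continuous_exp.tendsto 0).comp h1
      simpa [Function.comp_def] using this
    apply tendsto_of_tendsto_of_tendsto_of_le_of_le' tendsto_const_nhds hupper
    · filter_upwards [eventually_ge_atTop 3] with n hn
      have h1 : (1 : ℝ) ≤ l₀ / l n :=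
        (one_le_div (by linarith [hlb n hn])).mpr (hub n hn).le
      exact one_le_pow₀ h1
    · filter_upwards [eventually_ge_atTop 3] with n hn
      have hl12 := hlb n hn
      have hlnpos : (0 : ℝ) < l n := by linarith
      set y : ℝ := l₀ / l n - 1 with hy
      have hy0 : 0 ≤ y := by
        have : (1 : ℝ) ≤ l₀ / l n := (one_le_div hlnpos).mpr (hub n hn).le
        simp [hy]; linarith
      have hyle : y ≤ (5 / 3) * (5 / 6 : ℝ) ^ n := by
        have : y = (l₀ - l n) / l n := by
          rw [hy, div_sub_one hlnpos.ne']
        rw [this]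
        calc (l₀ - l n) / l n ≤ 2 * (5 / 6 : ℝ) ^ n / 1.2 :=
              div_le_div₀ (by positivity) (hε n hn) (by norm_num) hl12
          _ = (5 / 3) * (5 / 6 : ℝ) ^ n := by ring
      have step1 : (l₀ / l n) ^ (n - 2) ≤ Real.exp y ^ (n - 2) := by
        apply pow_le_pow_left₀ (by positivity)
        have := Real.add_one_le_exp y
        simp [hy] at this ⊢
        linarith
      have step2 : Real.exp y ^ (n - 2) = Real.exp ((n - 2 : ℕ) * y) := by
        rw [← Real.exp_nat_mul]
      have step3 : ((n - 2 : ℕ) : ℝ) * y ≤ (n : ℝ) * ((5 / 3) * (5 / 6 : ℝ) ^ n) := by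
        apply mul_le_mul _ hyle hy0 (by positivity)
        exact_mod_cast Nat.sub_le n 2
      calc (l₀ / l n) ^ (n - 2) ≤ Real.exp ((n - 2 : ℕ) * y) := step2 ▸ step1
        _ ≤ Real.exp ((n : ℝ) * ((5 / 3) * (5 / 6 : ℝ) ^ n)) := Real.exp_le_exp.mpr step3
  -- conclusion
  refine ⟨fun n hn => ⟨by linarith [hlb n hn], hub n hn⟩, ?_⟩
  have hql₀ : 0 < q l₀ := hqpos l₀ (by linarith)
  refine ⟨2 * l₀ ^ 2 / q l₀, by positivity, ?_⟩
  have hqln : Tendsto (fun n : ℕ => q (l n)) atTop (nhds (q l₀)) := by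
    have hcq : Continuous q := by simp only [hq]; fun_prop
    exact (hcq.tendsto l₀).comp hl_tendsto
  have hmain : Tendsto (fun n : ℕ => 2 * l₀ ^ 2 / q (l n) * (l₀ / l n) ^ (n - 2))
      atTop (nhds (2 * l₀ ^ 2 / q l₀ * 1)) :=
    (tendsto_const_nhds.div hqln hql₀.ne').mul hr_tendsto
  rw [mul_one] at hmain
  apply hmain.congr'
  filter_upwards [eventually_ge_atTop 3] with n hn
  have hl12 := hlb n hn
  have hlnpos : (0 : ℝ) < l n := by linarith
  have hqlnpos : 0 < q (l n) := hqpos _ hlnpos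
  have hpow : l₀ ^ n = l₀ ^ (n - 2) * l₀ ^ 2 := by
    rw [← pow_add]; congr 1; omega
  have hk := hkey n hn
  rw [div_pow]
  field_simp
  rw [hpow]
  linear_combination (-(l₀ ^ (n - 2) * l₀ ^ 2)) * hk
end

section
/- Let λ₀ > 1 be the largest real root of x^3 - x - 2. For even n ≥ 2, the polynomial x^{n-1}(x^3 - x - 2) - 2 has a largest real root λ_n satisfying λ_n > λ₀, and λ_n → λ₀ as n → ∞. -/
open Filter

/-- Let `λ₀ > 1` be the largest real root of `x^3 - x - 2`. For even `n ≥ 2`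
let `l n` be the largest real root of `x^(n-1)·(x^3 - x - 2) - 2`. Then
`l n > λ₀` and `l n → λ₀` as `n → ∞` through even integers. -/
theorem stmt_10 (l₀ : ℝ) (h₀ : l₀ ^ 3 - l₀ - 2 = 0) (h₀1 : 1 < l₀)
    (h₀max : ∀ y : ℝ, y ^ 3 - y - 2 = 0 → y ≤ l₀)
    (l : ℕ → ℝ)
    (hroot : ∀ n, 2 ≤ n → Even n →
      (l n) ^ (n - 1) * ((l n) ^ 3 - (l n) - 2) - 2 = 0)
    (hmax : ∀ n, 2 ≤ n → Even n → ∀ y : ℝ,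
      y ^ (n - 1) * (y ^ 3 - y - 2) - 2 = 0 → y ≤ l n) :
    (∀ n, 2 ≤ n → Even n → l₀ < l n) ∧
    Tendsto (fun k : ℕ => l (2 * k + 2)) atTop (nhds l₀) := by
  have hl02 : l₀ < 2 := by
    by_contra h; push_neg at h
    nlinarith [mul_nonneg (mul_nonneg (show (0:ℝ) ≤ l₀ by linarith)
      (show (0:ℝ) ≤ l₀ - 2 by linarith)) (show (0:ℝ) ≤ l₀ + 2 by linarith)]
  have key : ∀ n, 2 ≤ n → Even n → l₀ < l n ∧ l n ≤ l₀ + (1 / l₀) ^ (n - 1) := by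
    intro n hn2 hne
    have hcont : Continuous fun x : ℝ => x ^ (n - 1) * (x ^ 3 - x - 2) - 2 := by
      continuity
    have hf0 : (fun x : ℝ => x ^ (n - 1) * (x ^ 3 - x - 2) - 2) l₀ = -2 := by
      simp [h₀]
    have hn1 : 1 ≤ n - 1 := by omega
    have hf2 : (0 : ℝ) ≤ (fun x : ℝ => x ^ (n - 1) * (x ^ 3 - x - 2) - 2) 2 := by
      have h1 : (2 : ℝ) ^ 1 ≤ (2 : ℝ) ^ (n - 1) :=
        pow_le_pow_right₀ (by norm_num) hn1
      simp only
      nlinarith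
    obtain ⟨y, hy, hfy⟩ := intermediate_value_Icc hl02.le hcont.continuousOn
      (show (0 : ℝ) ∈ Set.Icc _ _ from ⟨by simp [h₀], hf2⟩)
    have hy0 : l₀ < y := lt_of_le_of_ne hy.1 (by
      rintro rfl; simp [h₀] at hfy)
    have hly : y ≤ l n := hmax n hn2 hne y hfy
    have h1 : l₀ < l n := hy0.trans_le hly
    refine ⟨h1, ?_⟩
    set x := l n with hx
    have hg : x ^ (n - 1) * (x ^ 3 - x - 2) = 2 := by
      have := hroot n hn2 hne; linarith
    have hx1 : 1 < x := h₀1.trans h1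
    have hQpos : 0 < l₀ ^ (n - 1) := pow_pos (by linarith) _
    have hPpos : 0 < x ^ (n - 1) := pow_pos (by linarith) _
    have hQP : l₀ ^ (n - 1) ≤ x ^ (n - 1) := pow_le_pow_left₀ (by linarith) h1.le _
    have hg2 : 2 * (x - l₀) ≤ x ^ 3 - x - 2 := by
      nlinarith [mul_nonneg (sub_nonneg.2 h1.le)
        (show (0 : ℝ) ≤ x ^ 2 + x * l₀ + l₀ ^ 2 - 3 by nlinarith)]
    have hkey : (x - l₀) * l₀ ^ (n - 1) ≤ 1 := by
      nlinarith [mul_le_mul_of_nonneg_left hQP (sub_nonneg.2 h1.le),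
        mul_le_mul_of_nonneg_right hg2 hPpos.le]
    have hxe : x - l₀ ≤ 1 / l₀ ^ (n - 1) := by
      rw [le_div_iff₀ hQpos]; exact hkey
    have : (1 : ℝ) / l₀ ^ (n - 1) = (1 / l₀) ^ (n - 1) := by
      rw [one_div_pow]
    linarith [hxe, this.le, this.ge]
  constructor
  · intro n hn2 hne; exact (key n hn2 hne).1
  · have hub : ∀ k : ℕ, l (2 * k + 2) ≤ l₀ + (1 / l₀) ^ (2 * k + 1) := by
      intro k
      have h := (key (2 * k + 2) (by omega) ⟨k + 1, by ring⟩).2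
      have he : 2 * k + 2 - 1 = 2 * k + 1 := by omega
      rwa [he] at h
    have hlb : ∀ k : ℕ, l₀ ≤ l (2 * k + 2) := fun k =>
      (key _ (by omega) ⟨k + 1, by ring⟩).1.le
    have h0 : Tendsto (fun k : ℕ => l₀ + (1 / l₀) ^ (2 * k + 1)) atTop (nhds l₀) := by
      have h1 : Tendsto (fun m : ℕ => (1 / l₀) ^ m) atTop (nhds 0) :=
        tendsto_pow_atTop_nhds_zero_of_lt_one (by positivity)
          (by rw [div_lt_one (by linarith)]; linarith)
      have h2 : Tendsto (fun k : ℕ => 2 * k + 1) atTop atTop :=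
        Filter.tendsto_atTop_atTop.2 fun b => ⟨b, fun a ha => by omega⟩
      have h3 := h1.comp h2
      have h4 := (tendsto_const_nhds : Tendsto (fun _ : ℕ => l₀) atTop (nhds l₀)).add h3
      simpa using h4
    exact tendsto_of_tendsto_of_tendsto_of_le_of_le tendsto_const_nhds h0 hlb hub
end

section
/- Let λ₀ > 1 be the largest real root of x^4 - 2x - 1. For n ≡ 3 mod 4, n ≥ 3, the polynomial x^n(x^4 - 2x - 1) + 2 has a largest real root λ_n with 1 < λ_n < λ₀ and λ_n → λ₀ as n → ∞. -/
set_option maxHeartbeats 1000000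

open Filter

/-- Let `λ₀ > 1` be the largest real root of `x^4 - 2x - 1`. For `n ≡ 3 (mod 4)`,
`n ≥ 3`, let `l n` be the largest real root of `x^n·(x^4 - 2x - 1) + 2`. Then
`1 < l n < λ₀` and `l n → λ₀` along `n = 4k + 3`. -/
theorem stmt_11 (l₀ : ℝ) (h₀ : l₀ ^ 4 - 2 * l₀ - 1 = 0) (h₀1 : 1 < l₀)
    (h₀max : ∀ y : ℝ, y ^ 4 - 2 * y - 1 = 0 → y ≤ l₀)
    (l : ℕ → ℝ)
    (hroot : ∀ n, 3 ≤ n → n % 4 = 3 →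
      (l n) ^ n * ((l n) ^ 4 - 2 * (l n) - 1) + 2 = 0)
    (hmax : ∀ n, 3 ≤ n → n % 4 = 3 → ∀ y : ℝ,
      y ^ n * (y ^ 4 - 2 * y - 1) + 2 = 0 → y ≤ l n) :
    (∀ n, 3 ≤ n → n % 4 = 3 → 1 < l n ∧ l n < l₀) ∧
    Tendsto (fun k : ℕ => l (4 * k + 3)) atTop (nhds l₀) := by
  -- q < 0 on [1, l₀)
  have hP : ∀ x : ℝ, 1 ≤ x → x < l₀ → x ^ 4 - 2 * x - 1 < 0 := by
    intro x hx1 hxl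
    nlinarith [mul_pos (sub_pos.2 hxl)
      (show (0:ℝ) < l₀ ^ 3 + l₀ ^ 2 * x + l₀ * x ^ 2 + x ^ 3 - 2 by nlinarith)]
  -- q > 0 beyond l₀
  have hQ : ∀ x : ℝ, l₀ < x → 0 < x ^ 4 - 2 * x - 1 := by
    intro x hxl
    nlinarith [mul_pos (sub_pos.2 hxl)
      (show (0:ℝ) < x ^ 3 + x ^ 2 * l₀ + x * l₀ ^ 2 + l₀ ^ 3 - 2 by nlinarith)]
  have h76 : (7:ℝ)/6 < l₀ := by
    by_contra h
    push_neg at h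
    rcases lt_or_eq_of_le h with h' | h'
    · have := hQ (7/6) h'
      norm_num at this
    · rw [h'] at h₀; norm_num at h₀
  -- f value at l₀ is 2
  have hfl₀ : ∀ n : ℕ, l₀ ^ n * (l₀ ^ 4 - 2 * l₀ - 1) + 2 = 2 := by
    intro n; rw [h₀]; ring
  -- any point in [1, l₀) where f ≤ 0 is a lower bound for l n
  have hroot_ge : ∀ n, 3 ≤ n → n % 4 = 3 → ∀ x : ℝ, 1 ≤ x → x < l₀ →
      x ^ n * (x ^ 4 - 2 * x - 1) + 2 ≤ 0 → x ≤ l n := by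
    intro n h3 h4 x hx1 hxl hfx
    have hcont : ContinuousOn (fun y : ℝ => y ^ n * (y ^ 4 - 2 * y - 1) + 2) (Set.Icc x l₀) :=
      Continuous.continuousOn (by continuity)
    have hmem : (0:ℝ) ∈ Set.Icc (x ^ n * (x ^ 4 - 2 * x - 1) + 2)
        (l₀ ^ n * (l₀ ^ 4 - 2 * l₀ - 1) + 2) := by
      constructor
      · exact hfx
      · rw [hfl₀]; norm_num
    obtain ⟨c, hc, hfc⟩ := intermediate_value_Icc hxl.le hcont hmem
    have := hmax n h3 h4 c hfc
    linarith [hc.1]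
  -- Part 1
  have hlt : ∀ n, 3 ≤ n → n % 4 = 3 → 1 < l n ∧ l n < l₀ := by
    intro n h3 h4
    obtain ⟨δ, hδdef⟩ : ∃ δ : ℝ, δ = 1 / (2 * (n:ℝ)) := ⟨_, rfl⟩
    have hn3 : (3:ℝ) ≤ (n:ℝ) := by exact_mod_cast h3
    have hδpos : 0 < δ := by rw [hδdef]; positivity
    have hδ6 : δ ≤ 1/6 := by
      rw [hδdef, div_le_div_iff₀ (by linarith) (by norm_num)]
      linarith
    have hnδ : (n:ℝ) * δ = 1/2 := by
      rw [hδdef]; field_simp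
    -- Bernoulli : (1+δ)^n ≥ 1 + nδ = 3/2
    have hbern : (3:ℝ)/2 ≤ (1 + δ) ^ n := by
      have := one_add_mul_le_pow (show (-2:ℝ) ≤ δ by linarith) n
      rw [hnδ] at this
      linarith
    have hd2 : δ ^ 2 ≤ (1/6) * δ := by nlinarith
    have hd3 : δ ^ 3 ≤ (1/36) * δ := by nlinarith
    have hd4 : δ ^ 4 ≤ (1/216) * δ := by nlinarith
    have hqδ : (1 + δ) ^ 4 - 2 * (1 + δ) - 1 < -4/3 := by nlinarith
    have hfδ : (1 + δ) ^ n * ((1 + δ) ^ 4 - 2 * (1 + δ) - 1) + 2 ≤ 0 := by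
      have h1 : (1 + δ) ^ n * ((1 + δ) ^ 4 - 2 * (1 + δ) - 1) ≤
          (3/2) * ((1 + δ) ^ 4 - 2 * (1 + δ) - 1) :=
        mul_le_mul_of_nonpos_right hbern (by linarith)
      linarith
    have hδl : 1 + δ < l₀ := by linarith
    have hge := hroot_ge n h3 h4 (1 + δ) (by linarith) hδl hfδ
    have h1n : 1 < l n := by linarith
    refine ⟨h1n, ?_⟩
    by_contra h
    push_neg at h
    rcases lt_or_eq_of_le h with h' | h'
    · have hq := hQ (l n) h'
      have hpow : 0 < (l n) ^ n := pow_pos (by linarith) n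
      have hr := hroot n h3 h4
      linarith [mul_pos hpow hq]
    · have hr := hroot n h3 h4
      rw [← h'] at hr
      rw [hfl₀] at hr
      norm_num at hr
  refine ⟨hlt, ?_⟩
  rw [Metric.tendsto_atTop]
  intro ε hε
  obtain ⟨x, hxdef⟩ : ∃ x : ℝ, x = max ((1 + l₀)/2) (l₀ - ε/2) := ⟨_, rfl⟩
  have hx1 : 1 < x := hxdef ▸ lt_of_lt_of_le (by linarith) (le_max_left _ _)
  have hxl : x < l₀ := hxdef ▸ max_lt (by linarith) (by linarith)
  have hxε : l₀ - ε/2 ≤ x := hxdef ▸ le_max_right _ _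
  have hq : x ^ 4 - 2 * x - 1 < 0 := hP x hx1.le hxl
  obtain ⟨N, hN⟩ := eventually_atTop.1
    ((tendsto_pow_atTop_atTop_of_one_lt hx1).eventually_ge_atTop (2 / (-(x ^ 4 - 2 * x - 1))))
  refine ⟨N, fun k hk => ?_⟩
  have h3 : 3 ≤ 4 * k + 3 := by omega
  have h4 : (4 * k + 3) % 4 = 3 := by omega
  have hNk : N ≤ 4 * k + 3 := by omega
  have hpow := hN _ hNk
  have hfx : x ^ (4 * k + 3) * (x ^ 4 - 2 * x - 1) + 2 ≤ 0 := by
    have hqpos : 0 < -(x ^ 4 - 2 * x - 1) := by linarith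
    have h1 : x ^ (4 * k + 3) * (x ^ 4 - 2 * x - 1) ≤
        (2 / (-(x ^ 4 - 2 * x - 1))) * (x ^ 4 - 2 * x - 1) :=
      mul_le_mul_of_nonpos_right hpow (by linarith)
    have h2 : (2 / (-(x ^ 4 - 2 * x - 1))) * (x ^ 4 - 2 * x - 1) = -2 := by
      rw [div_mul_eq_mul_div, div_eq_iff (by linarith : -(x ^ 4 - 2 * x - 1) ≠ 0)]; ring
    linarith
  have hge := hroot_ge _ h3 h4 x hx1.le hxl hfx
  have hub := (hlt _ h3 h4).2
  rw [Real.dist_eq, abs_lt]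
  constructor <;> linarith
end

section
/- Let A be a block lower-triangular nonnegative matrix with diagonal blocks B and R, where R is the p×p block-cyclic companion form whose only nonzero blocks are identity matrices on the subdiagonal and a square nonnegative matrix Â in the top-right corner. Then the characteristic polynomial of A equals χ_B(x)·χ_Â(x^p); in particular, x is an eigenvalue of R if and only if x^p is an eigenvalue of Â, and the Perron eigenvalue of A is max(λ_B, λ_Â^{1/p}). -/
set_option maxHeartbeats 800000


open Matrix Polynomial

/-- `l` is the Perron eigenvalue of the square matrix `M`: it is an eigenvalue
with a nonnegative eigenvector, and every complex eigenvalue of `M` has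
modulus at most `l`. -/
def IsPerronEigenvalue {n : Type*} [Fintype n] [DecidableEq n]
    (M : Matrix n n ℝ) (l : ℝ) : Prop :=
  (∃ v : n → ℝ, v ≠ 0 ∧ (∀ i, 0 ≤ v i) ∧ M.mulVec v = l • v) ∧
  ∀ μ : ℂ, (M.charpoly.map (algebraMap ℝ ℂ)).IsRoot μ → ‖μ‖ ≤ l

section
variable (p m : ℕ) [NeZero p] (Ahat : Matrix (Fin m) (Fin m) ℝ)
  (R : Matrix (Fin p × Fin m) (Fin p × Fin m) ℝ)

noncomputable def Umat : Matrix (Fin p × Fin m) (Fin p × Fin m) ℝ[X] :=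
  fun ik ts => if (ik.1 : ℕ) ≤ (ts.1 : ℕ) ∧ ik.2 = ts.2
    then X ^ ((ts.1 : ℕ) - (ik.1 : ℕ)) else 0

noncomputable def Nmat : Matrix (Fin p × Fin m) (Fin p × Fin m) ℝ[X] :=
  fun ik jl => if (jl.1 : ℕ) + 1 < p
    then (if (ik.1 : ℕ) = (jl.1 : ℕ) + 1 ∧ ik.2 = jl.2 then (-1 : ℝ[X]) else 0)
    else ((if ik.2 = jl.2 then X ^ (p - (ik.1 : ℕ)) else 0)
      - if (ik.1 : ℕ) = 0 then C (Ahat ik.2 jl.2) else 0)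

lemma UM_eq_N
    (hR : ∀ (i j : Fin p) (k l : Fin m),
      R (i, k) (j, l) =
        if (i : ℕ) = (j : ℕ) + 1 then (if k = l then 1 else 0)
        else if (i : ℕ) = 0 ∧ (j : ℕ) = p - 1 then Ahat k l else 0) :
    Umat p m * charmatrix R = Nmat p m Ahat := by
  have hcm : ∀ (t j : Fin p) (s l : Fin m), charmatrix R (t, s) (j, l)
      = (if (t : ℕ) = (j : ℕ) ∧ s = l then X else 0) - C (R (t, s) (j, l)) := by
    intro t j s l
    rw [charmatrix_apply]
    congr 1
    simp [diagonal_apply, Prod.ext_iff, Fin.ext_iff]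
  refine Matrix.ext fun ik jl => ?_
  obtain ⟨i, k⟩ := ik
  obtain ⟨j, l⟩ := jl
  rw [mul_apply, Fintype.sum_prod_type]
  have step1 : ∀ t : Fin p, ∑ s : Fin m, Umat p m (i,k) (t,s) * charmatrix R (t,s) (j,l)
      = (if (i:ℕ) ≤ (t:ℕ) then X ^ ((t:ℕ) - (i:ℕ)) else 0) * charmatrix R (t,k) (j,l) := by
    intro t
    rw [Finset.sum_eq_single k]
    · simp only [Umat, ite_and]
      by_cases h : (i:ℕ) ≤ (t:ℕ) <;> simp [h]
    · intro s _ hs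
      simp [Umat, Ne.symm hs]
    · simp
  simp only [step1]
  have step2 : ∀ t : Fin p,
      (if (i:ℕ) ≤ (t:ℕ) then X ^ ((t:ℕ) - (i:ℕ)) else 0) * charmatrix R (t,k) (j,l)
      = (if (t:ℕ) = (j:ℕ) then (if (i:ℕ) ≤ (j:ℕ) ∧ k = l then X ^ ((j:ℕ) - (i:ℕ) + 1) else 0) else 0)
        - (if (t:ℕ) = (j:ℕ) + 1 then (if (i:ℕ) ≤ (j:ℕ) + 1 ∧ k = l then X ^ ((j:ℕ) + 1 - (i:ℕ)) else 0) else 0)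
        - (if (t:ℕ) = 0 then (if (i:ℕ) = 0 ∧ (j:ℕ) = p - 1 then C (Ahat k l) else 0) else 0) := by
    intro t
    have hjp := j.isLt
    have hip := i.isLt
    have htp := t.isLt
    rw [hcm, hR]
    rcases eq_or_ne ((t:ℕ)) ((j:ℕ)) with ht | ht
    · -- t = j
      have h1 : ¬ ((t:ℕ) = (j:ℕ) + 1) := by omega
      rcases eq_or_ne p 1 with hp1 | hp1
      · -- p = 1
        have hi0 : (i:ℕ) = 0 := by omega
        have ht0 : (t:ℕ) = 0 := by omega
        rw [if_neg h1, if_pos (show (t:ℕ) = 0 ∧ (j:ℕ) = p - 1 from ⟨ht0, by omega⟩),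
          if_pos (show (i:ℕ) ≤ (t:ℕ) by omega), if_pos ht, if_neg h1, if_pos ht0,
          if_pos (show (i:ℕ) = 0 ∧ (j:ℕ) = p - 1 from ⟨hi0, by omega⟩)]
        by_cases hkl : k = l
        · rw [if_pos ⟨ht, hkl⟩, if_pos (show (i:ℕ) ≤ (j:ℕ) ∧ k = l from ⟨by omega, hkl⟩),
            show (t:ℕ) - (i:ℕ) = 0 by omega, show (j:ℕ) - (i:ℕ) + 1 = 1 by omega,
            pow_zero, pow_one, one_mul, sub_zero]
        · rw [if_neg (show ¬((t:ℕ) = (j:ℕ) ∧ k = l) from fun h => hkl h.2),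
            if_neg (show ¬((i:ℕ) ≤ (j:ℕ) ∧ k = l) from fun h => hkl h.2),
            show (t:ℕ) - (i:ℕ) = 0 by omega, pow_zero, one_mul, sub_zero]
      · -- p ≥ 2
        have h2 : ¬ ((t:ℕ) = 0 ∧ (j:ℕ) = p - 1) := by omega
        have h2' : ¬ ((i:ℕ) = 0 ∧ (j:ℕ) = p - 1) ∨ (t:ℕ) ≠ 0 := by omega
        rw [if_neg h1, if_neg h2, if_pos ht, if_neg h1, C_0, sub_zero, sub_zero]
        have e3 : (if (t:ℕ) = 0 then (if (i:ℕ) = 0 ∧ (j:ℕ) = p - 1 then C (Ahat k l) else 0) else 0)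
            = 0 := by
          rcases h2' with h | h
          · rw [if_neg h, ite_self]
          · rw [if_neg h]
        rw [e3, sub_zero]
        by_cases hkl : k = l
        · by_cases hij : (i:ℕ) ≤ (j:ℕ)
          · rw [if_pos (show (i:ℕ) ≤ (t:ℕ) by omega), if_pos ⟨ht, hkl⟩,
              if_pos (show (i:ℕ) ≤ (j:ℕ) ∧ k = l from ⟨hij, hkl⟩), ht, ← pow_succ]
          · rw [if_neg (show ¬ (i:ℕ) ≤ (t:ℕ) by omega), zero_mul,
              if_neg (show ¬((i:ℕ) ≤ (j:ℕ) ∧ k = l) from fun h => hij h.1)]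
        · rw [if_neg (show ¬((t:ℕ) = (j:ℕ) ∧ k = l) from fun h => hkl h.2), mul_zero,
            if_neg (show ¬((i:ℕ) ≤ (j:ℕ) ∧ k = l) from fun h => hkl h.2)]
    · rcases eq_or_ne ((t:ℕ)) ((j:ℕ)+1) with ht' | ht'
      · -- t = j + 1
        have hne0 : ¬ ((t:ℕ) = 0) := by omega
        rw [if_neg (show ¬((t:ℕ) = (j:ℕ) ∧ k = l) from fun h => ht h.1), if_pos ht',
          if_neg ht, if_pos ht', if_neg hne0, sub_zero, zero_sub, zero_sub,
          apply_ite C, C_1, C_0]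
        by_cases hkl : k = l
        · by_cases hij : (i:ℕ) ≤ (j:ℕ) + 1
          · rw [if_pos (show (i:ℕ) ≤ (t:ℕ) by omega), if_pos hkl,
              if_pos (show (i:ℕ) ≤ (j:ℕ) + 1 ∧ k = l from ⟨hij, hkl⟩), ht', mul_neg, mul_one]
          · rw [if_neg (show ¬ (i:ℕ) ≤ (t:ℕ) by omega), zero_mul,
              if_neg (show ¬((i:ℕ) ≤ (j:ℕ) + 1 ∧ k = l) from fun h => hij h.1), neg_zero]
        · rw [if_neg hkl, neg_zero, mul_zero,
            if_neg (show ¬((i:ℕ) ≤ (j:ℕ) + 1 ∧ k = l) from fun h => hkl h.2), neg_zero]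
      · -- t ∉ {j, j+1}
        rw [if_neg (show ¬((t:ℕ) = (j:ℕ) ∧ k = l) from fun h => ht h.1), if_neg ht',
          if_neg ht, if_neg ht']
        rcases eq_or_ne ((t:ℕ)) 0 with ht0 | ht0
        · rw [if_pos ht0]
          by_cases hc : (i:ℕ) = 0 ∧ (j:ℕ) = p - 1
          · rw [if_pos (show (t:ℕ) = 0 ∧ (j:ℕ) = p - 1 from ⟨ht0, hc.2⟩), if_pos hc,
              if_pos (show (i:ℕ) ≤ (t:ℕ) by omega),
              show (t:ℕ) - (i:ℕ) = 0 by omega, pow_zero]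
            ring
          · by_cases hj2 : (j:ℕ) = p - 1
            · rw [if_neg (show ¬ (i:ℕ) ≤ (t:ℕ) by omega), zero_mul, if_neg hc]
              simp
            · rw [if_neg (show ¬((t:ℕ) = 0 ∧ (j:ℕ) = p - 1) from fun h => hj2 h.2), if_neg hc]
              simp
        · rw [if_neg ht0, if_neg (show ¬((t:ℕ) = 0 ∧ (j:ℕ) = p - 1) from fun h => ht0 h.1)]
          simp
  calc ∑ t : Fin p, (if (i:ℕ) ≤ (t:ℕ) then X ^ ((t:ℕ) - (i:ℕ)) else 0) * charmatrix R (t,k) (j,l)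
      = ∑ t : Fin p, ((if (t:ℕ) = (j:ℕ) then (if (i:ℕ) ≤ (j:ℕ) ∧ k = l then X ^ ((j:ℕ) - (i:ℕ) + 1) else 0) else 0)
        - (if (t:ℕ) = (j:ℕ) + 1 then (if (i:ℕ) ≤ (j:ℕ) + 1 ∧ k = l then X ^ ((j:ℕ) + 1 - (i:ℕ)) else 0) else 0)
        - (if (t:ℕ) = 0 then (if (i:ℕ) = 0 ∧ (j:ℕ) = p - 1 then C (Ahat k l) else 0) else 0)) :=
        Finset.sum_congr rfl (fun t _ => step2 t)
    _ = Nmat p m Ahat (i,k) (j,l) := by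
        rw [Finset.sum_sub_distrib, Finset.sum_sub_distrib]
        have S1 : ∑ t : Fin p, (if (t:ℕ) = (j:ℕ) then (if (i:ℕ) ≤ (j:ℕ) ∧ k = l then (X:ℝ[X]) ^ ((j:ℕ) - (i:ℕ) + 1) else 0) else 0)
            = (if (i:ℕ) ≤ (j:ℕ) ∧ k = l then X ^ ((j:ℕ) - (i:ℕ) + 1) else 0) := by
          rw [Finset.sum_eq_single j]
          · rw [if_pos rfl]
          · intro t _ htj
            rw [if_neg (fun h => htj (Fin.ext h))]
          · simp
        have S3 : ∑ t : Fin p, (if (t:ℕ) = 0 then (if (i:ℕ) = 0 ∧ (j:ℕ) = p - 1 then (C (Ahat k l) : ℝ[X]) else 0) else 0)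
            = (if (i:ℕ) = 0 ∧ (j:ℕ) = p - 1 then C (Ahat k l) else 0) := by
          rw [Finset.sum_eq_single (0 : Fin p)]
          · rw [if_pos (Fin.val_zero p)]
          · intro t _ htj
            rw [if_neg (fun h => htj (Fin.ext (by simpa using h)))]
          · simp
        rw [S1, S3]
        by_cases hjp : (j:ℕ) + 1 < p
        · have S2 : ∑ t : Fin p, (if (t:ℕ) = (j:ℕ) + 1 then (if (i:ℕ) ≤ (j:ℕ) + 1 ∧ k = l then (X:ℝ[X]) ^ ((j:ℕ) + 1 - (i:ℕ)) else 0) else 0)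
              = (if (i:ℕ) ≤ (j:ℕ) + 1 ∧ k = l then X ^ ((j:ℕ) + 1 - (i:ℕ)) else 0) := by
            rw [Finset.sum_eq_single (⟨(j:ℕ)+1, hjp⟩ : Fin p)]
            · rw [if_pos rfl]
            · intro t _ htj
              rw [if_neg (fun h => htj (Fin.ext (by simpa using h)))]
            · simp
          rw [S2]
          show _ = if (j:ℕ) + 1 < p then _ else _
          rw [if_pos hjp, if_neg (show ¬((i:ℕ) = 0 ∧ (j:ℕ) = p - 1) from fun h => by omega),
            sub_zero]
          have hip := i.isLt
          by_cases hkl : k = l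
          · by_cases h1 : (i:ℕ) ≤ (j:ℕ)
            · rw [if_pos (show (i:ℕ) ≤ (j:ℕ) ∧ k = l from ⟨h1, hkl⟩),
                if_pos (show (i:ℕ) ≤ (j:ℕ) + 1 ∧ k = l from ⟨by omega, hkl⟩),
                if_neg (show ¬((i:ℕ) = (j:ℕ) + 1 ∧ k = l) from fun h => by omega),
                show (j:ℕ) - (i:ℕ) + 1 = (j:ℕ) + 1 - (i:ℕ) by omega, sub_self]
            · by_cases h2 : (i:ℕ) = (j:ℕ) + 1
              · rw [if_neg (show ¬((i:ℕ) ≤ (j:ℕ) ∧ k = l) from fun h => h1 h.1),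
                  if_pos (show (i:ℕ) ≤ (j:ℕ) + 1 ∧ k = l from ⟨by omega, hkl⟩),
                  if_pos (show (i:ℕ) = (j:ℕ) + 1 ∧ k = l from ⟨h2, hkl⟩),
                  show (j:ℕ) + 1 - (i:ℕ) = 0 by omega, pow_zero, zero_sub]
              · rw [if_neg (show ¬((i:ℕ) ≤ (j:ℕ) ∧ k = l) from fun h => h1 h.1),
                  if_neg (show ¬((i:ℕ) ≤ (j:ℕ) + 1 ∧ k = l) from fun h => by omega),
                  if_neg (show ¬((i:ℕ) = (j:ℕ) + 1 ∧ k = l) from fun h => h2 h.1), sub_self]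
          · rw [if_neg (show ¬((i:ℕ) ≤ (j:ℕ) ∧ k = l) from fun h => hkl h.2),
              if_neg (show ¬((i:ℕ) ≤ (j:ℕ) + 1 ∧ k = l) from fun h => hkl h.2),
              if_neg (show ¬((i:ℕ) = (j:ℕ) + 1 ∧ k = l) from fun h => hkl h.2), sub_self]
        · have S2 : ∑ t : Fin p, (if (t:ℕ) = (j:ℕ) + 1 then (if (i:ℕ) ≤ (j:ℕ) + 1 ∧ k = l then (X:ℝ[X]) ^ ((j:ℕ) + 1 - (i:ℕ)) else 0) else 0)
              = 0 := by
            apply Finset.sum_eq_zero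
            intro t _
            rw [if_neg (show ¬ ((t:ℕ) = (j:ℕ) + 1) by have := t.isLt; omega)]
          rw [S2, sub_zero]
          show _ = if (j:ℕ) + 1 < p then _ else _
          rw [if_neg hjp]
          have hip := i.isLt
          have hjp' := j.isLt
          have hj' : (j:ℕ) = p - 1 := by omega
          have h1 : (i:ℕ) ≤ (j:ℕ) := by omega
          congr 1
          · by_cases hkl : k = l
            · rw [if_pos (show (i:ℕ) ≤ (j:ℕ) ∧ k = l from ⟨h1, hkl⟩), if_pos hkl,
                show (j:ℕ) - (i:ℕ) + 1 = p - (i:ℕ) by omega]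
            · rw [if_neg (show ¬((i:ℕ) ≤ (j:ℕ) ∧ k = l) from fun h => hkl h.2), if_neg hkl]
          · by_cases hi0 : (i:ℕ) = 0
            · rw [if_pos (show (i:ℕ) = 0 ∧ (j:ℕ) = p - 1 from ⟨hi0, hj'⟩), if_pos hi0]
            · rw [if_neg (show ¬((i:ℕ) = 0 ∧ (j:ℕ) = p - 1) from fun h => hi0 h.1), if_neg hi0]

lemma detU_eq_one : (Umat p m).det = 1 := by
  haveI : Fintype (Lex (Fin p × Fin m)) := inferInstanceAs (Fintype (Fin p × Fin m))
  have h := Matrix.det_submatrix_equiv_self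
    (toLex : (Fin p × Fin m) ≃ Lex (Fin p × Fin m)).symm (Umat p m)
  rw [← h, Matrix.det_of_upperTriangular]
  · refine Finset.prod_eq_one fun x _ => ?_
    simp [Umat]
  · intro x y hxy
    rw [Matrix.submatrix_apply, Umat]
    refine if_neg fun hc => ?_
    rcases Prod.Lex.lt_iff.mp hxy with h1 | ⟨h1, h2⟩
    · exact absurd hc.1 (not_le.mpr h1)
    · exact absurd (hc.2 ▸ h2) (lt_irrefl _)

noncomputable def Tmat : Matrix (Fin m) (Fin m) ℝ[X] :=
  fun k l => (if k = l then (X:ℝ[X]) ^ p else 0) - C (Ahat k l)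

lemma fin_sub_one_val (c : Fin p) :
    ((c - 1 : Fin p) : ℕ) = if (c : ℕ) = 0 then p - 1 else (c : ℕ) - 1 := by
  have hp : 0 < p := Nat.pos_of_ne_zero (NeZero.ne p)
  rcases eq_or_ne p 1 with rfl | hp1
  · have h1 : c - 1 = 0 := Subsingleton.elim _ _
    have h2 : (c : ℕ) = 0 := by omega
    simp [h1, h2]
  · rw [Fin.coe_sub]
    have h1 : ((1 : Fin p) : ℕ) = 1 := by
      rw [Fin.val_one']
      exact Nat.mod_eq_of_lt (by omega)
    rw [h1]
    have hc := c.isLt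
    by_cases h0 : (c : ℕ) = 0
    · rw [if_pos h0, h0, Nat.add_zero]
      exact Nat.mod_eq_of_lt (by omega)
    · rw [if_neg h0, show p - 1 + (c:ℕ) = ((c:ℕ) - 1) + p by omega, Nat.add_mod_right]
      exact Nat.mod_eq_of_lt (by omega)

noncomputable def esum : (Fin m ⊕ Fin (p-1) × Fin m) ≃ Fin p × Fin m where
  toFun := Sum.elim
    (fun k => (⟨0, Nat.pos_of_ne_zero (NeZero.ne p)⟩, k))
    (fun ik => (⟨(ik.1 : ℕ) + 1, by have := ik.1.isLt; omega⟩, ik.2))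
  invFun := fun x => if h : (x.1 : ℕ) = 0 then Sum.inl x.2
    else Sum.inr (⟨(x.1 : ℕ) - 1, by have := x.1.isLt; omega⟩, x.2)
  left_inv := by
    rintro (k | ⟨i, k⟩)
    · simp
    · simp only [Sum.elim_inr]
      simp
  right_inv := by
    rintro ⟨i, k⟩
    dsimp only
    by_cases h : (i : ℕ) = 0
    · rw [dif_pos h]
      simp only [Sum.elim_inl]
      ext <;> simp [h.symm]
    · rw [dif_neg h]
      simp only [Sum.elim_inr]
      ext <;> simp <;> omega

lemma Nmat_apply (a b : Fin p × Fin m) : Nmat p m Ahat a b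
    = if (b.1 : ℕ) + 1 < p
      then (if (a.1 : ℕ) = (b.1 : ℕ) + 1 ∧ a.2 = b.2 then (-1 : ℝ[X]) else 0)
      else ((if a.2 = b.2 then X ^ (p - (a.1 : ℕ)) else 0)
        - if (a.1 : ℕ) = 0 then C (Ahat a.2 b.2) else 0) := rfl

lemma Tmat_apply (k l : Fin m) : Tmat p m Ahat k l
    = (if k = l then (X:ℝ[X]) ^ p else 0) - C (Ahat k l) := rfl

lemma esum_inl_fst (k : Fin m) : ((esum p m (Sum.inl k)).1 : ℕ) = 0 := rfl
lemma esum_inl_snd (k : Fin m) : (esum p m (Sum.inl k)).2 = k := rfl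
lemma esum_inr_fst (ik : Fin (p-1) × Fin m) :
    ((esum p m (Sum.inr ik)).1 : ℕ) = (ik.1 : ℕ) + 1 := rfl
lemma esum_inr_snd (ik : Fin (p-1) × Fin m) : (esum p m (Sum.inr ik)).2 = ik.2 := rfl

lemma esum_inl_fst_sub (k : Fin m) :
    (((esum p m (Sum.inl k)).1 - 1 : Fin p) : ℕ) = p - 1 := by
  rw [fin_sub_one_val, if_pos (esum_inl_fst p m k)]

lemma esum_inr_fst_sub (ik : Fin (p-1) × Fin m) :
    (((esum p m (Sum.inr ik)).1 - 1 : Fin p) : ℕ) = (ik.1 : ℕ) := by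
  rw [fin_sub_one_val, if_neg (by rw [esum_inr_fst]; omega), esum_inr_fst]
  omega

lemma detN_eq : ∃ ε : ℝ[X], (ε = 1 ∨ ε = -1) ∧
    (Nmat p m Ahat).det = ε * (Tmat p m Ahat).det := by
  have hp : 0 < p := Nat.pos_of_ne_zero (NeZero.ne p)
  set τ : Equiv.Perm (Fin p × Fin m) :=
    Equiv.prodCongr (Equiv.subRight (1 : Fin p)) (Equiv.refl (Fin m)) with hτ
  have hperm := Matrix.det_permute' τ (Nmat p m Ahat)
  have he2 := Matrix.det_submatrix_equiv_self (esum p m)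
    ((Nmat p m Ahat).submatrix id τ)
  have hblocks : ((Nmat p m Ahat).submatrix id τ).submatrix (esum p m) (esum p m)
      = fromBlocks (Tmat p m Ahat) 0
        (Matrix.of fun ik l => if ik.2 = l then (X:ℝ[X]) ^ (p - ((ik.1 : ℕ) + 1)) else 0)
        (-1) := by
    refine Matrix.ext fun a b => ?_
    rcases a with k | ik <;> rcases b with l | jl <;>
      simp only [Matrix.submatrix_apply, id_eq, hτ, Equiv.prodCongr_apply, Nmat_apply,
        Prod.map_fst, Prod.map_snd, id_eq,
        Equiv.subRight_apply, Equiv.refl_apply, esum_inl_fst, esum_inl_snd,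
        esum_inr_fst, esum_inr_snd, esum_inl_fst_sub, esum_inr_fst_sub,
        fromBlocks_apply₁₁, fromBlocks_apply₁₂, fromBlocks_apply₂₁, fromBlocks_apply₂₂]
    · rw [if_neg (show ¬ (p - 1 + 1 < p) by omega), Tmat_apply, Nat.sub_zero]
      simp
      split_ifs with h <;> simp [h]
    · rw [if_pos (show (jl.1:ℕ) + 1 < p by have := jl.1.isLt; omega),
        if_neg (by rintro ⟨h, -⟩; omega)]
      simp
    · rw [if_neg (show ¬ (p - 1 + 1 < p) by omega)]
      simp only [show ¬ ((ik.1:ℕ) + 1 = 0) by omega, ↓reduceIte, sub_zero, Matrix.of_apply]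
      split_ifs with h <;> simp [h]
    · rw [if_pos (show (jl.1:ℕ) + 1 < p by have := jl.1.isLt; omega), Matrix.neg_apply,
        Matrix.one_apply]
      by_cases h : ik = jl
      · rw [if_pos (by rw [h]; exact ⟨rfl, rfl⟩), if_pos h]
      · rw [if_neg, if_neg h]
        · simp
        · rintro ⟨h1, h2⟩
          exact h (Prod.ext (Fin.ext (by omega)) h2)
  have hdetblocks : (fromBlocks (Tmat p m Ahat) 0
        (Matrix.of fun ik l => if ik.2 = l then (X:ℝ[X]) ^ (p - ((ik.1 : ℕ) + 1)) else 0)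
        (-1 : Matrix (Fin (p-1) × Fin m) (Fin (p-1) × Fin m) ℝ[X])).det
      = (Tmat p m Ahat).det * (-1) ^ ((p-1) * m) := by
    rw [Matrix.det_fromBlocks_zero₁₂, Matrix.det_neg, Matrix.det_one, mul_one,
      Fintype.card_prod, Fintype.card_fin, Fintype.card_fin]
  rw [hblocks, hdetblocks] at he2
  rw [← he2] at hperm
  rcases Int.units_eq_one_or (Equiv.Perm.sign τ) with hs | hs <;> rw [hs] at hperm <;>
    simp only [Units.val_one, Units.val_neg, Int.cast_one, Int.cast_neg, neg_mul,
      one_mul] at hperm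
  · refine ⟨(-1) ^ ((p-1)*m), ?_, by linear_combination -hperm⟩
    rcases Nat.even_or_odd ((p-1)*m) with he | he
    · exact Or.inl he.neg_one_pow
    · exact Or.inr he.neg_one_pow
  · refine ⟨-(-1) ^ ((p-1)*m), ?_, by linear_combination hperm⟩
    rcases Nat.even_or_odd ((p-1)*m) with he | he
    · exact Or.inr (by rw [he.neg_one_pow])
    · exact Or.inl (by rw [he.neg_one_pow]; ring)

lemma Tdet_eq : (Tmat p m Ahat).det = Ahat.charpoly.comp ((X : ℝ[X]) ^ p) := by
  rw [comp_eq_aeval, Matrix.charpoly, ← AlgHom.coe_toRingHom, RingHom.map_det]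
  congr 1
  rw [RingHom.mapMatrix_apply]
  refine Matrix.ext fun k l => ?_
  rw [Matrix.map_apply, charmatrix_apply, Tmat_apply]
  rcases eq_or_ne k l with rfl | h
  · simp [diagonal_apply_eq]
  · simp [diagonal_apply_ne _ h, h]

lemma cyclic_charpoly
    (hR : ∀ (i j : Fin p) (k l : Fin m),
      R (i, k) (j, l) =
        if (i : ℕ) = (j : ℕ) + 1 then (if k = l then 1 else 0)
        else if (i : ℕ) = 0 ∧ (j : ℕ) = p - 1 then Ahat k l else 0) :
    R.charpoly = Ahat.charpoly.comp ((X : ℝ[X]) ^ p) := by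
  have hp : 0 < p := Nat.pos_of_ne_zero (NeZero.ne p)
  have h1 : R.charpoly = (Nmat p m Ahat).det := by
    have := congrArg Matrix.det (UM_eq_N p m Ahat R hR)
    rw [Matrix.det_mul, detU_eq_one, one_mul] at this
    rw [Matrix.charpoly, this]
  obtain ⟨ε, hε, hdN⟩ := detN_eq p m Ahat
  have hcomp : (Ahat.charpoly.comp ((X : ℝ[X]) ^ p)).Monic := by
    refine (Matrix.charpoly_monic Ahat).comp (monic_X_pow p) ?_
    rw [natDegree_X_pow]
    omega
  rcases hε with rfl | rfl
  · rw [h1, hdN, one_mul, Tdet_eq]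
  · exfalso
    have h2 : R.charpoly = -(Ahat.charpoly.comp ((X : ℝ[X]) ^ p)) := by
      rw [h1, hdN, Tdet_eq]
      ring
    have h3 := congrArg Polynomial.leadingCoeff h2
    rw [(Matrix.charpoly_monic R).leadingCoeff, leadingCoeff_neg, hcomp.leadingCoeff] at h3
    norm_num at h3

end

lemma eig_isRoot {n : Type*} [Fintype n] [DecidableEq n] (M : Matrix n n ℝ) {l : ℝ}
    (v : n → ℝ) (hv : v ≠ 0) (hvec : M.mulVec v = l • v) :
    (M.charpoly.map (algebraMap ℝ ℂ)).IsRoot (l : ℂ) := by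
  have hdet : (l • (1 : Matrix n n ℝ) - M).det = 0 := by
    rw [← Matrix.exists_mulVec_eq_zero_iff]
    refine ⟨v, hv, ?_⟩
    rw [Matrix.sub_mulVec, Matrix.smul_mulVec, Matrix.one_mulVec, hvec, sub_self]
  have heval : M.charpoly.IsRoot l := by
    rw [IsRoot, Matrix.charpoly, ← coe_evalRingHom, RingHom.map_det, RingHom.mapMatrix_apply]
    rw [show (charmatrix M).map (evalRingHom l) = l • (1 : Matrix n n ℝ) - M from ?_, hdet]
    refine Matrix.ext fun i j => ?_
    rw [Matrix.map_apply, charmatrix_apply, Matrix.sub_apply, Matrix.smul_apply,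
      Matrix.one_apply]
    rcases eq_or_ne i j with rfl | h
    · simp [diagonal_apply_eq]
    · simp [diagonal_apply_ne _ h, h]
  simpa using heval.map (f := algebraMap ℝ ℂ)

lemma perron_nonneg {n : Type*} [Fintype n] [DecidableEq n] {M : Matrix n n ℝ}
    (h0 : ∀ i j, 0 ≤ M i j) {l : ℝ} (h : IsPerronEigenvalue M l) : 0 ≤ l := by
  obtain ⟨⟨v, hv, hvnn, hvec⟩, -⟩ := h
  obtain ⟨i, hi⟩ := Function.ne_iff.mp hv
  have hvi : 0 < v i := lt_of_le_of_ne (hvnn i) (by simpa [eq_comm] using hi)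
  have h1 : 0 ≤ M.mulVec v i := Finset.sum_nonneg fun j _ => mul_nonneg (h0 i j) (hvnn j)
  rw [hvec] at h1
  simp only [Pi.smul_apply, smul_eq_mul] at h1
  nlinarith

lemma root_comp_pow (q : ℝ[X]) (p : ℕ) (μ : ℂ) :
    ((q.comp ((X:ℝ[X]) ^ p)).map (algebraMap ℝ ℂ)).IsRoot μ ↔
      (q.map (algebraMap ℝ ℂ)).IsRoot (μ ^ p) := by
  rw [Polynomial.map_comp, Polynomial.map_pow, map_X, IsRoot.def, IsRoot.def,
    eval_comp, eval_pow, eval_X]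


/-- Let `A` be block lower-triangular with diagonal blocks `B` and `R`, where
`R` is the `p × p` block-cyclic companion form with identity blocks on the
subdiagonal and a nonnegative `m × m` block `Â` in the top-right corner. Then
`χ_A(x) = χ_B(x)·χ_Â(x^p)`; in particular `x` is an eigenvalue of `R` iff
`x^p` is an eigenvalue of `Â`, and the Perron eigenvalue of `A` is
`max (λ_B, λ_Â^{1/p})`. -/
theorem stmt_15 (nB m p : ℕ) (hp : 0 < p)
    (B : Matrix (Fin nB) (Fin nB) ℝ)
    (Ahat : Matrix (Fin m) (Fin m) ℝ)
    (X : Matrix (Fin p × Fin m) (Fin nB) ℝ)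
    (R : Matrix (Fin p × Fin m) (Fin p × Fin m) ℝ)
    (hB0 : ∀ i j, 0 ≤ B i j) (hAhat0 : ∀ i j, 0 ≤ Ahat i j)
    (hX0 : ∀ i j, 0 ≤ X i j)
    (hR : ∀ (i j : Fin p) (k l : Fin m),
      R (i, k) (j, l) =
        if (i : ℕ) = (j : ℕ) + 1 then (if k = l then 1 else 0)
        else if (i : ℕ) = 0 ∧ (j : ℕ) = p - 1 then Ahat k l else 0)
    (A : Matrix (Fin nB ⊕ Fin p × Fin m) (Fin nB ⊕ Fin p × Fin m) ℝ)
    (hA : A = Matrix.fromBlocks B 0 X R)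
    (lB lAhat lA : ℝ)
    (hlB : IsPerronEigenvalue B lB) (hlAhat : IsPerronEigenvalue Ahat lAhat)
    (hlA : IsPerronEigenvalue A lA) :
    A.charpoly = B.charpoly * Ahat.charpoly.comp ((Polynomial.X : ℝ[X]) ^ p) ∧
    (∀ μ : ℂ, (R.charpoly.map (algebraMap ℝ ℂ)).IsRoot μ ↔
      (Ahat.charpoly.map (algebraMap ℝ ℂ)).IsRoot (μ ^ p)) ∧
    lA = max lB (lAhat ^ ((1 : ℝ) / p)) := by
  haveI : NeZero p := ⟨hp.ne'⟩
  have hcycl : R.charpoly = Ahat.charpoly.comp ((Polynomial.X : ℝ[X]) ^ p) :=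
    cyclic_charpoly p m Ahat R hR
  have hApoly : A.charpoly = B.charpoly * Ahat.charpoly.comp ((Polynomial.X : ℝ[X]) ^ p) := by
    rw [hA, Matrix.charpoly, charmatrix_fromBlocks, ← hcycl,
      show -((0 : Matrix (Fin nB) (Fin p × Fin m) ℝ).map C) = 0 by
        rw [Matrix.map_zero _ (map_zero C), neg_zero],
      Matrix.det_fromBlocks_zero₁₂]
    rfl
  refine ⟨hApoly, fun μ => by rw [hcycl]; exact root_comp_pow _ _ μ, ?_⟩
  have hA0 : ∀ i j, 0 ≤ A i j := by
    rw [hA]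
    rintro (i | ⟨ip, k⟩) (j | ⟨jp, l⟩)
    · exact hB0 i j
    · simp
    · exact hX0 _ _
    · show 0 ≤ R _ _
      rw [hR]
      split_ifs
      · exact zero_le_one
      · exact le_refl 0
      · exact hAhat0 _ _
      · exact le_refl 0
  have hlA0 : 0 ≤ lA := perron_nonneg hA0 hlA
  have hlB0 : 0 ≤ lB := perron_nonneg hB0 hlB
  have hlAhat0 : 0 ≤ lAhat := perron_nonneg hAhat0 hlAhat
  have hppos : (0:ℝ) < p := by exact_mod_cast hp
  have hrpow_pow : (lAhat ^ ((1:ℝ)/p)) ^ p = lAhat := by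
    rw [← Real.rpow_natCast (lAhat ^ ((1:ℝ)/p)) p, ← Real.rpow_mul hlAhat0, one_div,
      inv_mul_cancel₀ (ne_of_gt hppos), Real.rpow_one]
  have hmap : A.charpoly.map (algebraMap ℝ ℂ) = (B.charpoly.map (algebraMap ℝ ℂ)) *
      ((Ahat.charpoly.comp ((Polynomial.X : ℝ[X]) ^ p)).map (algebraMap ℝ ℂ)) := by
    rw [hApoly, Polynomial.map_mul]
  refine le_antisymm ?_ (max_le ?_ ?_)
  · obtain ⟨⟨v, hv, hvnn, hvec⟩, -⟩ := hlA
    have hroot := eig_isRoot A v hv hvec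
    rw [hmap, IsRoot.def, eval_mul, mul_eq_zero] at hroot
    rcases hroot with h | h
    · refine le_max_of_le_left ?_
      have := hlB.2 (lA:ℂ) h
      rwa [Complex.norm_real, Real.norm_eq_abs, abs_of_nonneg hlA0] at this
    · refine le_max_of_le_right ?_
      have h2 : (Ahat.charpoly.map (algebraMap ℝ ℂ)).IsRoot ((lA:ℂ)^p) :=
        (root_comp_pow _ _ _).mp h
      have h3 := hlAhat.2 _ h2
      rw [← Complex.ofReal_pow, Complex.norm_real, Real.norm_eq_abs, abs_of_nonneg (pow_nonneg hlA0 p)] at h3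
      calc lA = (lA ^ p) ^ ((1:ℝ)/p) := by
            rw [← Real.rpow_natCast lA p, ← Real.rpow_mul hlA0, mul_one_div,
              div_self (ne_of_gt hppos), Real.rpow_one]
        _ ≤ lAhat ^ ((1:ℝ)/p) := Real.rpow_le_rpow (pow_nonneg hlA0 p) h3 (by positivity)
  · obtain ⟨⟨v, hv, hvnn, hvec⟩, -⟩ := hlB
    have hroot := eig_isRoot B v hv hvec
    have h3 : (A.charpoly.map (algebraMap ℝ ℂ)).IsRoot (lB:ℂ) := by
      rw [IsRoot.def] at hroot ⊢
      rw [hmap, eval_mul, hroot, zero_mul]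
    have := hlA.2 _ h3
    rwa [Complex.norm_real, Real.norm_eq_abs, abs_of_nonneg hlB0] at this
  · obtain ⟨⟨v, hv, hvnn, hvec⟩, -⟩ := hlAhat
    have hroot := eig_isRoot Ahat v hv hvec
    set μ : ℂ := ((lAhat ^ ((1:ℝ)/p) : ℝ) : ℂ) with hμ
    have hμp : μ ^ p = ((lAhat : ℝ) : ℂ) := by
      rw [hμ, ← Complex.ofReal_pow, hrpow_pow]
    have h2 : ((Ahat.charpoly.comp ((Polynomial.X : ℝ[X]) ^ p)).map (algebraMap ℝ ℂ)).IsRoot μ := by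
      rw [root_comp_pow, hμp]
      exact hroot
    have h3 : (A.charpoly.map (algebraMap ℝ ℂ)).IsRoot μ := by
      rw [IsRoot.def] at h2 ⊢
      rw [hmap, eval_mul, h2, mul_zero]
    have := hlA.2 _ h3
    rwa [hμ, Complex.norm_real, Real.norm_eq_abs, abs_of_nonneg (Real.rpow_nonneg hlAhat0 _)] at this
end
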